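/- arXiv:math/0305037 — 11 statements merged into one kernel-verified Lean document; each statement's English description precedes it below -/
import Mathlib

section
/- If a simple graph G on n vertices contains no subgraph isomorphic to 2K_{1,2} (two vertex-disjoint paths with two edges each, i.e., two disjoint stars with two leaves), then G has at most 3n/2 + 2.5 edges. -/
open Finset

/-- If a simple graph on `n` vertices contains no subgraph isomorphic to `2K_{1,2}`
(two vertex-disjoint stars with two leaves each), then it has at most `3n/2 + 2.5` edges. -/
theorem stmt0 (n : ℕ) (G : SimpleGraph (Fin n)) [DecidableRel G.Adj]
    (h : ¬ ∃ a b c d e f : Fin n, G.Adj a b ∧ G.Adj a c ∧ b ≠ c ∧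
      G.Adj d e ∧ G.Adj d f ∧ e ≠ f ∧
      Disjoint ({a, b, c} : Finset (Fin n)) {d, e, f}) :
    2 * G.edgeFinset.card ≤ 3 * n + 5 := by
  classical
  have hsum : ∑ v : Fin n, G.degree v = 2 * G.edgeFinset.card :=
    G.sum_degrees_eq_twice_card_edges
  have hdeglt : ∀ v : Fin n, G.degree v < n := by
    intro v
    simpa using G.degree_lt_card_verts v
  have split : ∀ (S : Finset (Fin n)) (w : Fin n),
      (S.filter (G.Adj w)).card + (Sᶜ.filter (G.Adj w)).card = G.degree w := by
    intro S w
    rw [← Finset.card_union_of_disjoint (Finset.disjoint_filter_filter disjoint_compl_right),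
      ← Finset.filter_union, Finset.union_compl]
    simp [SimpleGraph.degree, SimpleGraph.neighborFinset_eq_filter]
  have dc : ∀ A B : Finset (Fin n),
      ∑ w ∈ A, (B.filter (G.Adj w)).card = ∑ s ∈ B, (A.filter (G.Adj s)).card := by
    intro A B
    simp_rw [Finset.card_filter]
    rw [Finset.sum_comm]
    exact Finset.sum_congr rfl fun s _ => Finset.sum_congr rfl fun w _ =>
      if_congr (G.adj_comm w s) rfl rfl
  have mk_disj : ∀ a b c d e f : Fin n, a ≠ d → a ≠ e → a ≠ f → b ≠ d → b ≠ e → b ≠ f →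
      c ≠ d → c ≠ e → c ≠ f → Disjoint ({a, b, c} : Finset (Fin n)) {d, e, f} := by
    intro a b c d e f h1 h2 h3 h4 h5 h6 h7 h8 h9
    rw [Finset.disjoint_left]
    intro x hx hx'
    simp only [Finset.mem_insert, Finset.mem_singleton] at hx hx'
    rcases hx with rfl | rfl | rfl <;> rcases hx' with h' | h' | h' <;> exact absurd h' (by assumption)
  by_cases hn5 : n ≤ 5
  · -- small case
    have : ∑ v : Fin n, G.degree v ≤ n * (n - 1) := by
      calc ∑ v : Fin n, G.degree v ≤ ∑ _v : Fin n, (n - 1) :=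
            Finset.sum_le_sum fun v _ => by have := hdeglt v; omega
        _ = n * (n - 1) := by simp [mul_comm]
    interval_cases n <;> omega
  push_neg at hn5
  by_cases hP : ∃ a b c : Fin n, G.Adj a b ∧ G.Adj a c ∧ b ≠ c
  · obtain ⟨a, b, c, hab, hac, hbc⟩ := hP
    by_cases hbig : ∃ v : Fin n, 5 ≤ G.degree v
    · -- a vertex of large degree: everything else has at most one neighbor off v
      obtain ⟨v, hv⟩ := hbig
      have key : ∀ w : Fin n, w ≠ v → ((({v} : Finset (Fin n))ᶜ).filter (G.Adj w)).card ≤ 1 := by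
        intro w hw
        by_contra hcon
        push_neg at hcon
        obtain ⟨x, hx, y, hy, hxy⟩ := Finset.one_lt_card.1 hcon
        simp only [Finset.mem_filter, Finset.mem_compl, Finset.mem_singleton] at hx hy
        -- pick two neighbors of v avoiding w, x, y
        have hT : 2 ≤ (G.neighborFinset v \ {w, x, y}).card := by
          have h1 : (G.neighborFinset v).card ≤ (G.neighborFinset v \ {w, x, y}).card
              + ({w, x, y} : Finset (Fin n)).card := by
            apply Finset.card_le_card_sdiff_add_card
          have h2 : ({w, x, y} : Finset (Fin n)).card ≤ 3 := by
            have t1 := Finset.card_insert_le w ({x, y} : Finset (Fin n))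
            have t2 := Finset.card_insert_le x ({y} : Finset (Fin n))
            have t3 : ({y} : Finset (Fin n)).card = 1 := Finset.card_singleton y
            omega
          have h3 : (G.neighborFinset v).card = G.degree v := rfl
          omega
        have hT2 : 1 < (G.neighborFinset v \ {w, x, y}).card := by omega
        obtain ⟨p, hp, q, hq, hpq⟩ := Finset.one_lt_card.1 hT2
        simp only [Finset.mem_sdiff, SimpleGraph.mem_neighborFinset, Finset.mem_insert,
          Finset.mem_singleton] at hp hq
        push_neg at hp hq
        exact h ⟨v, p, q, w, x, y, hp.1, hq.1, hpq,
          hx.2, hy.2, hxy,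
          mk_disj _ _ _ _ _ _ (Ne.symm hw) (Ne.symm hx.1) (Ne.symm hy.1)
            hp.2.1 hp.2.2.1 hp.2.2.2 hq.2.1 hq.2.2.1 hq.2.2.2⟩
      have hdeg2 : ∀ w : Fin n, w ≠ v → G.degree w ≤ 2 := by
        intro w hw
        have := split {v} w
        have h1 : (({v} : Finset (Fin n)).filter (G.Adj w)).card ≤ 1 := by
          apply le_trans (Finset.card_filter_le _ _); simp
        have := key w hw
        omega
      have hsplit := Finset.sum_add_sum_compl ({v} : Finset (Fin n)) (G.degree ·)
      have h1 : ∑ w ∈ ({v} : Finset (Fin n)), G.degree w = G.degree v := by simp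
      have h2 : ∑ w ∈ ({v} : Finset (Fin n))ᶜ, G.degree w ≤ 2 * (n - 1) := by
        calc ∑ w ∈ ({v} : Finset (Fin n))ᶜ, G.degree w
            ≤ ∑ _w ∈ ({v} : Finset (Fin n))ᶜ, 2 := by
              apply Finset.sum_le_sum
              intro w hw
              exact hdeg2 w (by simpa using hw)
          _ = 2 * (n - 1) := by simp [Finset.card_compl, mul_comm]
      have := hdeglt v
      omega
    · -- all degrees ≤ 4
      push_neg at hbig
      set S : Finset (Fin n) := {a, b, c} with hS
      have hnab : a ≠ b := G.ne_of_adj hab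
      have hnac : a ≠ c := G.ne_of_adj hac
      have hScard : S.card = 3 := by
        rw [hS, Finset.card_insert_of_notMem (by simp [hnab, hnac]),
          Finset.card_insert_of_notMem (by simp [hbc]), Finset.card_singleton]
      have hout : ∀ w ∉ S, ((Sᶜ).filter (G.Adj w)).card ≤ 1 := by
        intro w hw
        by_contra hcon
        push_neg at hcon
        obtain ⟨x, hx, y, hy, hxy⟩ := Finset.one_lt_card.1 hcon
        simp only [Finset.mem_filter, Finset.mem_compl] at hx hy
        have hwS : w ≠ a ∧ w ≠ b ∧ w ≠ c := by
          constructor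
          · intro hh; exact hw (by simp [hS, hh])
          constructor
          · intro hh; exact hw (by simp [hS, hh])
          · intro hh; exact hw (by simp [hS, hh])
        have hxS : x ≠ a ∧ x ≠ b ∧ x ≠ c := by
          refine ⟨?_, ?_, ?_⟩ <;> intro hh <;> exact hx.1 (by simp [hS, hh])
        have hyS : y ≠ a ∧ y ≠ b ∧ y ≠ c := by
          refine ⟨?_, ?_, ?_⟩ <;> intro hh <;> exact hy.1 (by simp [hS, hh])
        exact h ⟨a, b, c, w, x, y, hab, hac, hbc, hx.2, hy.2, hxy,
          mk_disj _ _ _ _ _ _ (Ne.symm hwS.1) (Ne.symm hxS.1) (Ne.symm hyS.1)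
            (Ne.symm hwS.2.1) (Ne.symm hxS.2.1) (Ne.symm hyS.2.1)
            (Ne.symm hwS.2.2) (Ne.symm hxS.2.2) (Ne.symm hyS.2.2)⟩
      -- sum over S of outside-neighbors counts
      have hfa : 2 ≤ (S.filter (G.Adj a)).card := by
        apply Finset.one_lt_card.2
        exact ⟨b, by simp [hS, hab], c, by simp [hS, hac], hbc⟩
      have hfb : 1 ≤ (S.filter (G.Adj b)).card := by
        apply Finset.card_pos.2
        exact ⟨a, by simp [hS, (G.adj_comm a b).1 hab]⟩
      have hfc : 1 ≤ (S.filter (G.Adj c)).card := by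
        apply Finset.card_pos.2
        exact ⟨a, by simp [hS, (G.adj_comm a c).1 hac]⟩
      have hsumS : ∑ s ∈ S, ((Sᶜ).filter (G.Adj s)).card ≤ 8 := by
        rw [hS, Finset.sum_insert (by simp [hnab, hnac]),
          Finset.sum_insert (by simp [hbc]), Finset.sum_singleton]
        have ha' := split S a
        have hb' := split S b
        have hc' := split S c
        rw [hS] at ha' hb' hc' hfa hfb hfc
        have hda := hbig a
        have hdb := hbig b
        have hdc' := hbig c
        omega
      have hcompl : Sᶜ.card = n - 3 := by
        rw [Finset.card_compl, hScard]; simp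
      have hsum2 : ∑ w ∈ Sᶜ, G.degree w ≤ 8 + (n - 3) := by
        calc ∑ w ∈ Sᶜ, G.degree w
            = ∑ w ∈ Sᶜ, ((S.filter (G.Adj w)).card + ((Sᶜ).filter (G.Adj w)).card) :=
              Finset.sum_congr rfl fun w _ => (split S w).symm
          _ = (∑ w ∈ Sᶜ, (S.filter (G.Adj w)).card) + ∑ w ∈ Sᶜ, ((Sᶜ).filter (G.Adj w)).card :=
              Finset.sum_add_distrib
          _ ≤ 8 + (n - 3) := by
              have h1 : ∑ w ∈ Sᶜ, (S.filter (G.Adj w)).card ≤ 8 := by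
                rw [dc Sᶜ S]; exact hsumS
              have h2 : ∑ w ∈ Sᶜ, ((Sᶜ).filter (G.Adj w)).card ≤ n - 3 := by
                calc ∑ w ∈ Sᶜ, ((Sᶜ).filter (G.Adj w)).card ≤ ∑ _w ∈ Sᶜ, 1 :=
                      Finset.sum_le_sum fun w hw => hout w (by simpa using hw)
                  _ = n - 3 := by simp [hcompl]
              omega
      have hsum1 : ∑ s ∈ S, G.degree s ≤ 12 := by
        calc ∑ s ∈ S, G.degree s ≤ ∑ _s ∈ S, 4 :=
              Finset.sum_le_sum fun s _ => by have := hbig s; omega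
          _ = 12 := by rw [Finset.sum_const, hScard]; rfl
      have hsplit := Finset.sum_add_sum_compl S (G.degree ·)
      omega
  · -- no P3 at all: matching
    push_neg at hP
    have hdeg1 : ∀ w : Fin n, G.degree w ≤ 1 := by
      intro w
      by_contra hcon
      push_neg at hcon
      obtain ⟨x, hx, y, hy, hxy⟩ := Finset.one_lt_card.1 hcon
      rw [SimpleGraph.mem_neighborFinset] at hx hy
      exact hxy (hP w x y hx hy |> fun hh => by tauto)
    have : ∑ v : Fin n, G.degree v ≤ n := by
      calc ∑ v : Fin n, G.degree v ≤ ∑ _v : Fin n, 1 :=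
            Finset.sum_le_sum fun v _ => hdeg1 v
        _ = n := by simp
    omega
end

section
/- If a simple graph G on n vertices has a vertex of degree at least 5 and contains no subgraph isomorphic to 2K_{1,2}, then G has at most 3n/2 - 1.5 edges. -/
/-!
Let `v` have degree at least 5. A vertex `u ≠ v` of degree at least 3 has two neighbours
`b, c` other than `v`, and `v` still has two neighbours outside `{u, b, c}`; these two cherries
are disjoint. So every vertex other than `v` has degree at most 2, and the degree sum is at most
`(n - 1) + 2 (n - 1)`.
-/

open Finset

namespace SimpleGraph

variable {V : Type*} [Fintype V] [DecidableEq V] (G : SimpleGraph V) [DecidableRel G.Adj]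

/-- A cherry is a copy of the path `K_{1,2}`. -/
def HasTwoDisjointCherries : Prop :=
  ∃ a b c d e f : V, G.Adj a b ∧ G.Adj a c ∧ b ≠ c ∧ G.Adj d e ∧ G.Adj d f ∧ e ≠ f ∧
    Disjoint ({a, b, c} : Finset V) {d, e, f}

variable {G}

lemma exists_adj_adj_notMem_of_card_add_two_le_degree {v : V} {s : Finset V}
    (hs : #s + 2 ≤ G.degree v) :
    ∃ e f, G.Adj v e ∧ G.Adj v f ∧ e ≠ f ∧ e ∉ s ∧ f ∉ s := by
  have hcard : 1 < #(G.neighborFinset v \ s) := by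
    have := le_card_sdiff s (G.neighborFinset v)
    rw [card_neighborFinset_eq_degree] at this
    omega
  obtain ⟨e, he, f, hf, hef⟩ := one_lt_card.mp hcard
  simp only [mem_sdiff, mem_neighborFinset] at he hf
  exact ⟨e, f, he.1, hf.1, hef, he.2, hf.2⟩

lemma degree_le_two_of_five_le_degree (h : ¬ G.HasTwoDisjointCherries) {u v : V}
    (hv : 5 ≤ G.degree v) (huv : u ≠ v) : G.degree u ≤ 2 := by
  by_contra! hu
  have hcard_u : #({v} : Finset V) + 2 ≤ G.degree u := by rw [card_singleton]; omega
  obtain ⟨b, c, hub, huc, hbc, hbv, hcv⟩ :=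
    exists_adj_adj_notMem_of_card_add_two_le_degree hcard_u
  have hcard_v : #({u, b, c} : Finset V) + 2 ≤ G.degree v := by
    have := card_le_three (a := u) (b := b) (c := c)
    omega
  obtain ⟨e, f, hve, hvf, hef, he, hf⟩ :=
    exists_adj_adj_notMem_of_card_add_two_le_degree hcard_v
  refine h ⟨u, b, c, v, e, f, hub, huc, hbc, hve, hvf, hef, ?_⟩
  simp only [mem_singleton] at hbv hcv
  simp only [disjoint_insert_right, disjoint_singleton_right, he, hf, mem_insert,
    mem_singleton, not_false_eq_true, and_true]
  rintro (rfl | rfl | rfl) <;> simp_all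

lemma two_mul_card_edgeFinset_le_of_degree_le {v : V} {k : ℕ}
    (hk : ∀ u, u ≠ v → G.degree u ≤ k) :
    2 * #G.edgeFinset ≤ G.degree v + k * (Fintype.card V - 1) := by
  rw [← sum_degrees_eq_twice_card_edges, ← add_sum_erase _ _ (mem_univ v)]
  gcongr
  refine (sum_le_card_nsmul _ _ k fun u hu ↦ hk u (ne_of_mem_erase hu)).trans ?_
  simp [card_erase_of_mem, mul_comm]

end SimpleGraph

/-- If a simple graph on `n` vertices has a vertex of degree at least 5 and contains no
subgraph isomorphic to `2K_{1,2}`, then it has at most `3n/2 - 1.5` edges. -/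
theorem stmt1 (n : ℕ) (G : SimpleGraph (Fin n)) [DecidableRel G.Adj]
    (hdeg : ∃ v : Fin n, 5 ≤ G.degree v)
    (h : ¬ ∃ a b c d e f : Fin n, G.Adj a b ∧ G.Adj a c ∧ b ≠ c ∧
      G.Adj d e ∧ G.Adj d f ∧ e ≠ f ∧
      Disjoint ({a, b, c} : Finset (Fin n)) {d, e, f}) :
    2 * G.edgeFinset.card + 3 ≤ 3 * n := by
  obtain ⟨v, hv⟩ := hdeg
  have hedges := G.two_mul_card_edgeFinset_le_of_degree_le fun u huv ↦
    SimpleGraph.degree_le_two_of_five_le_degree h hv huv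
  have hdegv := G.degree_lt_card_verts v
  rw [Fintype.card_fin] at hedges hdegv
  omega
end

section
/- For every n ≥ 3, the graph on vertex set [n] whose edges are {i, n} for all i ∈ [n-1] together with a matching {1,2},{3,4},... on [n-1] has n + floor((n-1)/2) - 1 edges and contains no subgraph isomorphic to 2K_{1,2}. -/
/-- For `n ≥ 3`, the graph on `[n]` with edges `{i,n}` for `i ∈ [n-1]` together with the
matching `{1,2},{3,4},...` on `[n-1]` has `n + ⌊(n-1)/2⌋ - 1` edges and no `2K_{1,2}` subgraph. -/
theorem stmt2 (n : ℕ) (hn : 3 ≤ n) (E : Finset (Sym2 ℕ))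
    (hE : E = ((Finset.Icc 1 (n - 1)).image fun i => s(i, n)) ∪
      ((Finset.Icc 1 ((n - 1) / 2)).image fun i => s(2 * i - 1, 2 * i))) :
    E.card = n + (n - 1) / 2 - 1 ∧
    ¬ ∃ a b c d e f : ℕ, s(a, b) ∈ E ∧ s(a, c) ∈ E ∧ b ≠ c ∧
      s(d, e) ∈ E ∧ s(d, f) ∈ E ∧ e ≠ f ∧
      Disjoint ({a, b, c} : Finset ℕ) {d, e, f} := by
  subst hE
  constructor
  · rw [Finset.card_union_of_disjoint, Finset.card_image_of_injOn,
      Finset.card_image_of_injOn]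
    · simp only [Nat.card_Icc]
      omega
    · intro i hi j hj h
      simp only [Finset.coe_Icc, Set.mem_Icc] at hi hj
      rw [Sym2.eq_iff] at h
      omega
    · intro i hi j hj h
      simp only [Finset.coe_Icc, Set.mem_Icc] at hi hj
      rw [Sym2.eq_iff] at h
      omega
    · rw [Finset.disjoint_left]
      rintro x hx hx'
      simp only [Finset.mem_image, Finset.mem_Icc] at hx hx'
      obtain ⟨i, hi, rfl⟩ := hx
      obtain ⟨j, hj, h⟩ := hx'
      rw [Sym2.eq_iff] at h
      omega
  · rintro ⟨a, b, c, d, e, f, hab, hac, hbc, hde, hdf, hef, hdisj⟩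
    have key : ∀ a b c : ℕ,
        s(a, b) ∈ ((Finset.Icc 1 (n - 1)).image fun i => s(i, n)) ∪
          ((Finset.Icc 1 ((n - 1) / 2)).image fun i => s(2 * i - 1, 2 * i)) →
        s(a, c) ∈ ((Finset.Icc 1 (n - 1)).image fun i => s(i, n)) ∪
          ((Finset.Icc 1 ((n - 1) / 2)).image fun i => s(2 * i - 1, 2 * i)) →
        b ≠ c → n = a ∨ n = b ∨ n = c := by
      intro a b c h1 h2 hbc
      simp only [Finset.mem_union, Finset.mem_image, Finset.mem_Icc, Sym2.eq_iff] at h1 h2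
      obtain ⟨i, hi, h1⟩ | ⟨i, hi, h1⟩ := h1
      · omega
      · obtain ⟨j, hj, h2⟩ | ⟨j, hj, h2⟩ := h2
        · omega
        · omega
    have k1 := key a b c hab hac hbc
    have k2 := key d e f hde hdf hef
    rw [Finset.disjoint_left] at hdisj
    have h1 : n ∈ ({a, b, c} : Finset ℕ) := by
      rcases k1 with h | h | h <;> simp [h]
    have h2 : n ∈ ({d, e, f} : Finset ℕ) := by
      rcases k2 with h | h | h <;> simp [h]
    exact hdisj h1 h2
end

section
/- Let G be a simple graph on vertex set [n] that does not contain the ordered graph G_0 = ({1,3},{1,5},{2,4},{2,6}) (i.e., there are no six vertices v_1 < v_2 < ... < v_6 with {v_1,v_3}, {v_1,v_5}, {v_2,v_4}, {v_2,v_6} all edges of G). Form the sequence v = I_1 I_2 ... I_n over alphabet [n], where I_i is the decreasing ordering of the set {j : {j,i} ∈ E(G), j < i}. Then v contains no subsequence of the form a b a b a b a b with a ≠ b (an 8-term alternation). -/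
/-!
Read `v` as the concatenation of the strictly decreasing blocks `I_1, …, I_n`. Walking along an
occurrence of a pattern in `v`, the block index never decreases, and it strictly increases
between two occurrences `p ≤ q` (a block cannot contain them in this order). An 8-term
alternation of `a ≠ b` contains `y x y x y x y` with `x < y`; if its letters lie in the blocks
`I_{m₀}, …, I_{m₆}`, then `y < m₀ ≤ m₁ < m₂ < m₄ ≤ m₅ < m₆`, and the vertices
`x < y < m₁ < m₂ < m₅ < m₆` span the edges `x m₁, x m₅, y m₂, y m₆` of an ordered copy
of `G_0`.
-/

section Blocks

variable {α : Type*} [LinearOrder α]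

theorem exists_blockIndex_of_sublist_flatMap (f : ℕ → List α)
    (hf : ∀ i, (f i).Pairwise (· > ·)) (n : ℕ) (pat : List α)
    (h : pat.Sublist ((List.range n).flatMap f)) :
    ∃ j : ℕ → ℕ, (∀ k (hk : k < pat.length), j k < n ∧ pat[k] ∈ f (j k)) ∧
      Monotone j ∧
      ∀ k k' (hk' : k' < pat.length) (hkk' : k < k'),
        pat[k]'(hkk'.trans hk') ≤ pat[k'] → j k < j k' := by
  induction n generalizing pat with
  | zero =>
    obtain rfl : pat = [] := by simpa using h
    exact ⟨fun _ => 0, by simp, monotone_const, by simp⟩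
  | succ n ih =>
    rw [List.range_succ, List.flatMap_append, List.flatMap_singleton] at h
    obtain ⟨p, q, rfl, hp, hq⟩ := List.sublist_append_iff.mp h
    obtain ⟨j, hmem, hmono, hstrict⟩ := ih p hp
    have hq_gt : q.Pairwise (· > ·) := (hf n).sublist hq
    refine ⟨fun k => if k < p.length then j k else n, ?_, ?_, ?_⟩
    · intro k hk
      by_cases hkp : k < p.length
      · simpa [hkp, List.getElem_append_left hkp] using ⟨(hmem k hkp).1.le, (hmem k hkp).2⟩
      · simp only [hkp, if_false, List.getElem_append_right (not_lt.mp hkp)]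
        exact ⟨n.lt_succ_self, hq.subset (List.getElem_mem _)⟩
    · intro k k' hkk'
      by_cases hk'p : k' < p.length
      · simpa [hk'p, show k < p.length by omega] using hmono hkk'
      · by_cases hkp : k < p.length
        · simpa [hkp, hk'p] using (hmem k hkp).1.le
        · simp [hkp, hk'p]
    · intro k k' hk' hkk' hle
      have hk : k < (p ++ q).length := by omega
      by_cases hk'p : k' < p.length
      · have hkp : k < p.length := by omega
        rw [List.getElem_append_left hkp, List.getElem_append_left hk'p] at hle
        simpa [hkp, hk'p] using hstrict k k' hk'p hkk' hle
      · by_cases hkp : k < p.length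
        · simpa [hkp, hk'p] using (hmem k hkp).1
        · exfalso
          rw [List.getElem_append_right (not_lt.mp hkp),
            List.getElem_append_right (not_lt.mp hk'p)] at hle
          have := List.pairwise_iff_getElem.mp hq_gt (k - p.length) (k' - p.length)
            (by simp at hk; omega) (by simp at hk'; omega) (by omega)
          exact absurd hle (not_le.mpr this)

end Blocks

/-- The block `I_m` of the statement. -/
def descLowerNeighbors (G : SimpleGraph ℕ) [DecidableRel G.Adj] (m : ℕ) : List ℕ :=
  (((Finset.Ico 1 m).filter fun j => G.Adj j m).sort (· ≤ ·)).reverse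

def HasOrderedCopyG0 (G : SimpleGraph ℕ) (n : ℕ) : Prop :=
  ∃ w : Fin 6 → ℕ, StrictMono w ∧ (∀ i, w i ∈ Finset.Icc 1 n) ∧
    G.Adj (w 0) (w 2) ∧ G.Adj (w 0) (w 4) ∧ G.Adj (w 1) (w 3) ∧ G.Adj (w 1) (w 5)

section LowerNeighbors

variable (G : SimpleGraph ℕ) [DecidableRel G.Adj]

theorem mem_descLowerNeighbors {j m : ℕ} :
    j ∈ descLowerNeighbors G m ↔ (1 ≤ j ∧ j < m) ∧ G.Adj j m := by
  simp [descLowerNeighbors]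

theorem pairwise_gt_descLowerNeighbors (m : ℕ) : (descLowerNeighbors G m).Pairwise (· > ·) := by
  simpa [descLowerNeighbors, List.pairwise_reverse] using
    (Finset.sortedLT_sort ((Finset.Ico 1 m).filter fun j => G.Adj j m)).pairwise

theorem hasOrderedCopyG0_of_sublist {n x y : ℕ}
    (hG : ∀ i j, G.Adj i j → i ∈ Finset.Icc 1 n ∧ j ∈ Finset.Icc 1 n) (hxy : x < y)
    (h : [y, x, y, x, y, x, y].Sublist
      ((List.range n).flatMap fun i => descLowerNeighbors G (i + 1))) :
    HasOrderedCopyG0 G n := by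
  obtain ⟨m, hmem, hmono, hstrict⟩ := exists_blockIndex_of_sublist_flatMap _
    (fun i => pairwise_gt_descLowerNeighbors G (i + 1)) n _ h
  have mem : ∀ k (hk : k < 7), _ := fun k hk => (mem_descLowerNeighbors G).mp (hmem k hk).2
  have hy₀ : y < m 0 + 1 := (mem 0 (by omega)).1.2
  have hx₁ : G.Adj x (m 1 + 1) := (mem 1 (by omega)).2
  have hy₂ : G.Adj y (m 2 + 1) := (mem 2 (by omega)).2
  have hx₅ : G.Adj x (m 5 + 1) := (mem 5 (by omega)).2
  have hy₆ : G.Adj y (m 6 + 1) := (mem 6 (by omega)).2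
  have h01 : m 0 ≤ m 1 := hmono (by omega)
  have h12 := hstrict 1 2 (by simp) (by omega) (by simpa using hxy.le)
  have h24 := hstrict 2 4 (by simp) (by omega) (by simp)
  have h45 : m 4 ≤ m 5 := hmono (by omega)
  have h56 := hstrict 5 6 (by simp) (by omega) (by simpa using hxy.le)
  refine ⟨![x, y, m 1 + 1, m 2 + 1, m 5 + 1, m 6 + 1], ?_, ?_, hx₁, hx₅, hy₂, hy₆⟩
  · refine Fin.strictMono_iff_lt_succ.mpr fun i => ?_
    fin_cases i <;> simp <;> omega
  · intro i
    fin_cases i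
    exacts [(hG _ _ hx₁).1, (hG _ _ hy₂).1, (hG _ _ hx₁).2, (hG _ _ hy₂).2,
      (hG _ _ hx₅).2, (hG _ _ hy₆).2]

end LowerNeighbors

/-- If an ordered graph `G` on `[n]` contains no ordered copy of
`G_0 = ({1,3},{1,5},{2,4},{2,6})`, then the sequence `v = I_1 I_2 ⋯ I_n`, where `I_i` is the
decreasing ordering of the lower neighbourhood of `i`, contains no 8-term alternation
`abababab` with `a ≠ b`. -/
theorem stmt3 (n : ℕ) (G : SimpleGraph ℕ) [DecidableRel G.Adj]
    (hG : ∀ i j, G.Adj i j → i ∈ Finset.Icc 1 n ∧ j ∈ Finset.Icc 1 n)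
    (h0 : ¬ ∃ w : Fin 6 → ℕ, StrictMono w ∧ (∀ i, w i ∈ Finset.Icc 1 n) ∧
      G.Adj (w 0) (w 2) ∧ G.Adj (w 0) (w 4) ∧ G.Adj (w 1) (w 3) ∧ G.Adj (w 1) (w 5))
    (v : List ℕ)
    (hv : v = (List.range n).flatMap fun i =>
      (((Finset.Ico 1 (i + 1)).filter fun j => G.Adj j (i + 1)).sort (· ≤ ·)).reverse) :
    ¬ ∃ a b : ℕ, a ≠ b ∧ [a, b, a, b, a, b, a, b].Sublist v := by
  rintro ⟨a, b, hab, hsub⟩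
  change v = (List.range n).flatMap fun i => descLowerNeighbors G (i + 1) at hv
  subst hv
  rcases hab.lt_or_gt with hlt | hgt
  · exact h0 (hasOrderedCopyG0_of_sublist G hG hlt ((List.sublist_cons_self _ _).trans hsub))
  · exact h0 (hasOrderedCopyG0_of_sublist G hG hgt ((List.dropLast_sublist _).trans hsub))
end

section
/- Let v be a 2-sparse sequence over the alphabet [n] containing no 5-term alternating subsequence a b a b a (a ≠ b), such that every symbol appears at least twice, and such that for 1 ≤ i < j ≤ n the first occurrence of j precedes the first occurrence of i. Then in the unique decomposition v = I_1 I_2 ... I_{2n} into intervals each ending with an extremal term (a first or last occurrence of a symbol) and containing no other extremal term, every interval I_i consists of distinct terms. -/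
/-!
Suppose a symbol `a` occurs at positions `p < q` of one interval, and let `b` be the term at
`q - 1`; sparseness gives `p + 1 < q` and `b ≠ a`. The position `q - 1` is interior to the
interval, so it is not extremal: `b` occurs both before `q - 1` and after `q`. The first
occurrence of `b` is extremal, so it cannot lie strictly between `p` and `q`; it therefore
precedes `p`, and `b a b a b` is an alternating subsequence of `v`.
-/

/-- Position `k` of the sequence `v` is extremal: it is the first or the last occurrence
of its symbol in `v`. -/
def IsExtremal (v : List ℕ) (k : ℕ) : Prop :=
  k < v.length ∧ ((∀ k' < k, v.getD k' 0 ≠ v.getD k 0) ∨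
    (∀ k', k < k' → k' < v.length → v.getD k' 0 ≠ v.getD k 0))

namespace List

variable {α : Type*}

theorem getElem?_flatten_length_take_add (L : List (List α)) {j t : ℕ} (hj : j < L.length)
    (ht : t < L[j].length) : L.flatten[(L.take j).flatten.length + t]? = L[j][t]? := by
  have hL : L.flatten = (L.take j).flatten ++ (L[j] ++ (L.drop (j + 1)).flatten) := by
    rw [← flatten_cons, ← flatten_append, ← drop_eq_getElem_cons hj, take_append_drop]
  rw [hL, getElem?_append_right (by omega), Nat.add_sub_cancel_left, getElem?_append_left ht]

theorem getD_ne_getD_succ_of_isChain_ne {l : List α} (hl : l.IsChain (· ≠ ·)) (d : α)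
    {k : ℕ} (hk : k + 1 < l.length) : l.getD k d ≠ l.getD (k + 1) d := by
  rw [getD_eq_getElem l d (by omega), getD_eq_getElem l d hk]
  exact isChain_iff_getElem.mp hl k hk

theorem cons_getD_sublist_drop {l s : List α} (d : α) {k k' : ℕ} (hkk' : k < k')
    (hk : k < l.length) (hs : s <+ l.drop k') : l.getD k d :: s <+ l.drop k := by
  rw [drop_eq_getElem_cons hk, getD_eq_getElem l d hk]
  refine hs.trans ?_ |>.cons_cons _
  rw [show k' = k + 1 + (k' - (k + 1)) by omega, ← drop_drop]
  exact drop_sublist _ _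

theorem getD_five_sublist {l : List α} (d : α) {i₀ i₁ i₂ i₃ i₄ : ℕ} (h₀₁ : i₀ < i₁)
    (h₁₂ : i₁ < i₂) (h₂₃ : i₂ < i₃) (h₃₄ : i₃ < i₄) (h₄ : i₄ < l.length) :
    [l.getD i₀ d, l.getD i₁ d, l.getD i₂ d, l.getD i₃ d, l.getD i₄ d] <+ l := by
  have := cons_getD_sublist_drop d (Nat.lt_succ_self i₄) h₄ (nil_sublist _)
  have := cons_getD_sublist_drop d h₃₄ (by omega) this
  have := cons_getD_sublist_drop d h₂₃ (by omega) this
  have := cons_getD_sublist_drop d h₁₂ (by omega) this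
  exact (cons_getD_sublist_drop d h₀₁ (by omega) this).trans (drop_sublist _ _)

end List

section Extremal

variable {v : List ℕ}

theorem exists_isExtremal_le_getD_eq {k : ℕ} (hk : k < v.length) :
    ∃ f ≤ k, IsExtremal v f ∧ v.getD f 0 = v.getD k 0 := by
  classical
  have hex : ∃ f, v.getD f 0 = v.getD k 0 := ⟨k, rfl⟩
  have hfk : Nat.find hex ≤ k := Nat.find_min' hex rfl
  refine ⟨Nat.find hex, hfk, ⟨by omega, Or.inl fun k' hk' => ?_⟩, Nat.find_spec hex⟩
  rw [Nat.find_spec hex]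
  exact Nat.find_min hex hk'

theorem exists_getD_eq_of_not_isExtremal {k : ℕ} (hk : k < v.length) (h : ¬ IsExtremal v k) :
    (∃ k' < k, v.getD k' 0 = v.getD k 0) ∧
      ∃ k', k < k' ∧ k' < v.length ∧ v.getD k' 0 = v.getD k 0 := by
  simpa [IsExtremal, hk, not_or] using h

theorem getD_ne_getD_of_forall_not_isExtremal (hsparse : v.IsChain (· ≠ ·))
    (hnoalt : ¬ ∃ a b : ℕ, a ≠ b ∧ [a, b, a, b, a].Sublist v) {p q : ℕ} (hpq : p < q)
    (hq : q < v.length) (hint : ∀ k, p < k → k < q → ¬ IsExtremal v k) :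
    v.getD p 0 ≠ v.getD q 0 := by
  intro hpq_eq
  have hq_ne : p + 1 ≠ q := fun h => List.getD_ne_getD_succ_of_isChain_ne hsparse 0
    (by omega) (h ▸ hpq_eq)
  have hba : v.getD (q - 1) 0 ≠ v.getD q 0 := by
    simpa [show q - 1 + 1 = q by omega] using
      List.getD_ne_getD_succ_of_isChain_ne hsparse 0 (k := q - 1) (by omega)
  obtain ⟨⟨k, hk, hvk⟩, r, hr, hrlen, hvr⟩ :=
    exists_getD_eq_of_not_isExtremal (by omega) (hint (q - 1) (by omega) (by omega))
  obtain ⟨f, hfk, hf, hvf⟩ := exists_isExtremal_le_getD_eq (v := v) (k := k) (by omega)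
  have hrq : q < r := by
    have : r ≠ q := fun h => hba (h ▸ hvr).symm
    omega
  have hfp : f < p := by
    rcases lt_trichotomy f p with h | rfl | h
    · exact h
    · exact absurd (hpq_eq ▸ hvf.trans hvk).symm hba
    · exact absurd hf (hint f h (by omega))
  have hbabab := List.getD_five_sublist 0 hfp (show p < q - 1 by omega) (by omega) hrq hrlen
  rw [hvf, hvk, hpq_eq, hvr] at hbabab
  exact hnoalt ⟨_, _, hba, hbabab⟩

end Extremal

theorem stmt4_general (v : List ℕ)
    (hsparse : v.Chain' (· ≠ ·))
    (hnoalt : ¬ ∃ a b : ℕ, a ≠ b ∧ [a, b, a, b, a].Sublist v)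
    (Is : List (List ℕ))
    (hjoin : Is.flatten = v)
    (hend : ∀ j : Fin Is.length, (Is.get j) ≠ [] ∧
      IsExtremal v (((Is.take j).flatten).length + (Is.get j).length - 1) ∧
      ∀ t, t + 1 < (Is.get j).length → ¬ IsExtremal v (((Is.take j).flatten).length + t)) :
    ∀ I ∈ Is, I.Nodup := by
  intro I hI
  obtain ⟨j, rfl⟩ := List.mem_iff_get.mp hI
  set s := (Is.take j).flatten.length
  have hv : ∀ t < (Is.get j).length, v[s + t]? = (Is.get j)[t]? := fun t ht =>
    hjoin ▸ List.getElem?_flatten_length_take_add Is j.isLt ht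
  refine List.nodup_iff_getElem?_ne_getElem?.mpr fun i i' hii' hi' heq => ?_
  obtain ⟨hlen, -⟩ :=
    List.getElem?_eq_some_iff.mp ((hv i' hi').trans (List.getElem?_eq_getElem hi'))
  refine getD_ne_getD_of_forall_not_isExtremal hsparse hnoalt (p := s + i) (by omega) hlen
    (fun k hk hk' => ?_) ?_
  · obtain ⟨t, rfl⟩ : ∃ t, k = s + t := ⟨k - s, by omega⟩
    exact (hend j).2.2 t (by omega)
  · rw [List.getD_eq_getElem?_getD, List.getD_eq_getElem?_getD, hv i (by omega), hv i' hi', heq]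

/-- Let `v` be a 2-sparse sequence over `[n]` with no 5-term alternation `ababa`, in which
every symbol appears at least twice and the first occurrences of the symbols come in
decreasing order.  In the decomposition `v = I_1 ⋯ I_{2n}` into intervals each of which ends
with an extremal term and contains no other extremal term, every interval has distinct
terms. -/
theorem stmt4 (n : ℕ) (v : List ℕ)
    (hmem : ∀ x ∈ v, x ∈ Finset.Icc 1 n)
    (hsparse : v.Chain' (· ≠ ·))
    (hnoalt : ¬ ∃ a b : ℕ, a ≠ b ∧ [a, b, a, b, a].Sublist v)
    (htwice : ∀ i ∈ Finset.Icc 1 n, 2 ≤ v.count i)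
    (hfirst : ∀ i j : ℕ, 1 ≤ i → i < j → j ≤ n → v.idxOf j < v.idxOf i)
    (Is : List (List ℕ))
    (hjoin : Is.flatten = v) (hlen : Is.length = 2 * n)
    (hend : ∀ j : Fin Is.length, (Is.get j) ≠ [] ∧
      IsExtremal v (((Is.take j).flatten).length + (Is.get j).length - 1) ∧
      ∀ t, t + 1 < (Is.get j).length → ¬ IsExtremal v (((Is.take j).flatten).length + t)) :
    ∀ I ∈ Is, I.Nodup :=
  stmt4_general v hsparse hnoalt Is hjoin hend
end

section
/- Every (3k+1)-multiple G of the graph G_1 = ({1,3},{1,5},{2,3},{2,4}) is a k-blow-up of G_1: for every edge coloring of G using each color at most k times, there is an ordered copy of G_1 in G with four distinct colors on its edges. -/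
/-- The set of vertices of a hypergraph given as a list of finite edges. -/
def vset (H : List (Finset ℕ)) : Finset ℕ := H.foldr (· ∪ ·) ∅

/-- The number of vertices `v(H)`. -/
def nv (H : List (Finset ℕ)) : ℕ := (vset H).card

/-- The weight `i(H)`, the number of vertex-edge incidences. -/
def iw (H : List (Finset ℕ)) : ℕ := (H.map Finset.card).sum

/-- A hypergraph is simple if its edges are distinct (and nonempty). -/
def HSimple (H : List (Finset ℕ)) : Prop := H.Nodup ∧ ∀ E ∈ H, E.Nonempty

/-- Ordered hypergraph containment: an increasing vertex injection together with an
injective assignment of edges such that each edge of `F` maps vertex-wise into its image. -/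
def HContains (H F : List (Finset ℕ)) : Prop :=
  ∃ (φ : ℕ → ℕ) (f : Fin F.length → Fin H.length),
    StrictMono φ ∧ Function.Injective f ∧
      ∀ i : Fin F.length, ∀ v ∈ F.get i, φ v ∈ H.get (f i)

/-- `ex_e(F,n)`: max number of edges of a simple `F`-free hypergraph on at most `n` vertices. -/
noncomputable def exE (F : List (Finset ℕ)) (n : ℕ) : ℕ :=
  sSup {m | ∃ H, HSimple H ∧ ¬ HContains H F ∧ nv H ≤ n ∧ H.length = m}

/-- `ex_i(F,n)`: max weight of a simple `F`-free hypergraph on at most `n` vertices. -/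
noncomputable def exI (F : List (Finset ℕ)) (n : ℕ) : ℕ :=
  sSup {m | ∃ H, HSimple H ∧ ¬ HContains H F ∧ nv H ≤ n ∧ iw H = m}

/-- A hypergraph is a graph if all edges have two vertices. -/
def IsGraphH (H : List (Finset ℕ)) : Prop := ∀ E ∈ H, E.card = 2

/-- `gex(B,n)` for a family `B` of ordered graphs. -/
noncomputable def gexSet (B : Set (List (Finset ℕ))) (n : ℕ) : ℕ :=
  sSup {m | ∃ G, HSimple G ∧ IsGraphH G ∧ (∀ F ∈ B, ¬ HContains G F) ∧ nv G ≤ n ∧ G.length = m}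

/-- `gex(F,n)` for a single ordered graph. -/
noncomputable def gex (F : List (Finset ℕ)) (n : ℕ) : ℕ := gexSet {F} n

/-- `G'` is a `k`-blow-up of `G`: every edge colouring of `G'` using each colour at most `k`
times admits an ordered copy of `G` with pairwise distinct colours. -/
def IsBlowup (k : ℕ) (G' G : List (Finset ℕ)) : Prop :=
  ∀ χ : Fin G'.length → ℕ,
    (∀ c : ℕ, (Finset.univ.filter fun i => χ i = c).card ≤ k) →
    ∃ (φ : ℕ → ℕ) (f : Fin G.length → Fin G'.length),
      StrictMono φ ∧ Function.Injective f ∧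
      (∀ i : Fin G.length, ∀ v ∈ G.get i, φ v ∈ G'.get (f i)) ∧
      Function.Injective (χ ∘ f)

/-- The hierarchy `F_1(n) = 2n`, `F_{i+1}(n) = F_i iterated n times starting at 1`
(indexed from 0, so `Fiter i = F_{i+1}`). -/
def Fiter : ℕ → ℕ → ℕ
  | 0, n => 2 * n
  | i+1, n => (Fiter i)^[n] 1

/-- The Ackermann function `A(n) = F_n(n)`. -/
def Ack (n : ℕ) : ℕ := Fiter (n - 1) n

/-- The inverse Ackermann function `α(n) = min {m : A(m) ≥ n}`. -/
noncomputable def invAck (n : ℕ) : ℕ := sInf {m | n ≤ Ack m}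

/-- The almost constant factor `β(k,l,n)` from the generalized Davenport–Schinzel bound. -/
noncomputable def DSbeta (k l n : ℕ) : ℕ :=
  k * 2 ^ (k * l - 3) * (10 * k) ^ (2 * (invAck n) ^ (k * l - 4) + 8 * (invAck n) ^ (k * l - 5))

/-- The ordered graph `G_1 = ({1,3},{1,5},{2,3},{2,4})`. -/
def G1 : List (Finset ℕ) := [{1,3}, {1,5}, {2,3}, {2,4}]

/-- A `k`-multiple of `G_1`. -/
def IsMultiple (k : ℕ) (G : List (Finset ℕ)) : Prop :=
  HSimple G ∧ IsGraphH G ∧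
  ∃ (A B C : Finset ℕ) (v : ℕ),
    A.card = k ∧ (∀ a ∈ A, a < v) ∧ (∀ b ∈ B, v < b) ∧
    (∀ b ∈ B, ∀ c ∈ C, b < c) ∧
    vset G = A ∪ {v} ∪ B ∪ C ∧
    (∀ a ∈ A, ({a, v} : Finset ℕ) ∈ G) ∧
    (∀ a ∈ A, (B.filter fun b => ({a, b} : Finset ℕ) ∈ G).card = k) ∧
    (∀ a ∈ A, (C.filter fun c => ({a, c} : Finset ℕ) ∈ G).card = k) ∧
    (∀ E ∈ G, (∃ a ∈ A, E = {a, v}) ∨ (∃ a ∈ A, ∃ w ∈ B ∪ C, E = {a, w}))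

/-!
Colour classes have at most `k` edges. Below `a₂ = max A` and above `min A` lie `3k - 1 > k`
vertices of `A`, so one of them, `a₁`, has its edge to `v` coloured differently from `a₂ v`.
The vertex `a₂` has `3k+1 > 2k` neighbours in `B`, so some edge `a₂ b` avoids both colours; then
`a₁` has `3k+1 > 3k` neighbours in `C`, so some edge `a₁ c` avoids all three. The edges `a₁ v`,
`a₁ c`, `a₂ v`, `a₂ b` on `a₁ < a₂ < v < b < c` form a rainbow copy of `G_1`.
-/

open Finset

lemma List.exists_leftInverse_get {α : Type*} {G : List α} (hG : G ≠ []) :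
    ∃ idx : α → Fin G.length, ∀ E ∈ G, G.get (idx E) = E := by
  have (E : α) : ∃ i : Fin G.length, E ∈ G → G.get i = E := by
    by_cases hE : E ∈ G
    · obtain ⟨i, hi⟩ := List.mem_iff_get.mp hE
      exact ⟨i, fun _ => hi⟩
    · exact ⟨⟨0, List.length_pos_iff.mpr hG⟩, fun h => absurd h hE⟩
  choose idx hidx using this
  exact ⟨idx, hidx⟩

section Pigeonhole

variable {α β : Type*} [DecidableEq β] {S : Finset α} {g : α → β} {k : ℕ}

lemma exists_notMem_of_card_fiber_le (hg : ∀ c, #(S.filter (g · = c)) ≤ k) {cs : Finset β}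
    (hcs : #cs * k < #S) : ∃ a ∈ S, g a ∉ cs := by
  by_contra! h
  obtain ⟨c, -, hc⟩ := exists_lt_card_fiber_of_mul_lt_card_of_maps_to h hcs
  exact (hc.trans_le (hg c)).false

lemma card_fiber_comp_le {ι : Type*} [Fintype ι] {χ : ι → β}
    (hχ : ∀ c, #(univ.filter (χ · = c)) ≤ k) {f : α → ι} (hf : Set.InjOn f S) (c : β) :
    #(S.filter fun a => χ (f a) = c) ≤ k :=
  (card_le_card_of_injOn f (fun a ha => by simpa using (mem_filter.mp ha).2)
    (hf.mono (coe_subset.mpr (filter_subset _ S)))).trans (hχ c)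

lemma exists_lt_lt_ne_of_card_fiber_le [LinearOrder α]
    (hg : ∀ c, #(S.filter (g · = c)) ≤ k) (hS : k + 2 < #S) :
    ∃ a₀ ∈ S, ∃ a₁ ∈ S, ∃ a₂ ∈ S, a₀ < a₁ ∧ a₁ < a₂ ∧ g a₁ ≠ g a₂ := by
  have hne : S.Nonempty := card_pos.mp (by omega)
  set a₀ := S.min' hne
  set a₂ := S.max' hne
  have h02 : a₀ < a₂ := min'_lt_max'_of_card S (by omega)
  have hcard : #((S.erase a₀).erase a₂) = #S - 2 := by
    rw [card_erase_of_mem (mem_erase.mpr ⟨h02.ne', max'_mem S hne⟩),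
      card_erase_of_mem (min'_mem S hne)]
    omega
  obtain ⟨a₁, ha₁, hg₁⟩ := exists_notMem_of_card_fiber_le (cs := {g a₂})
    (fun c => (card_le_card (filter_subset_filter _
      ((erase_subset _ _).trans (erase_subset _ _)))).trans (hg c))
    (by rw [hcard, card_singleton]; omega)
  simp only [mem_erase] at ha₁
  exact ⟨a₀, min'_mem S hne, a₁, ha₁.2.2, a₂, max'_mem S hne,
    lt_of_le_of_ne (min'_le S a₁ ha₁.2.2) (Ne.symm ha₁.2.1),
    lt_of_le_of_ne (le_max' S a₁ ha₁.2.2) ha₁.1, by simpa using hg₁⟩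

end Pigeonhole

lemma injOn_pair_left {α : Type*} [DecidableEq α] {S : Finset α} {a : α} (ha : a ∉ S) :
    Set.InjOn (fun x => ({a, x} : Finset α)) S := by
  intro x hx y hy h
  have : x ∈ ({a, y} : Finset α) := by simp only at h; simp [← h]
  rcases mem_insert.mp this with rfl | hxy
  · exact absurd hx ha
  · exact mem_singleton.mp hxy

lemma injOn_pair_right {α : Type*} [DecidableEq α] {S : Finset α} {a : α} (ha : a ∉ S) :
    Set.InjOn (fun x => ({x, a} : Finset α)) S := by
  simpa only [pair_comm] using injOn_pair_left ha

-- Ordered embeddings are maps on all of `ℕ`, so vertex `0`, which lies on no edge of `G1`, still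
-- needs an image below that of vertex `1`.
def g1VertexMap (x₀ x₁ x₂ x₃ x₄ x₅ : ℕ) : ℕ → ℕ
  | 0 => x₀
  | 1 => x₁
  | 2 => x₂
  | 3 => x₃
  | 4 => x₄
  | n + 5 => x₅ + n

lemma strictMono_g1VertexMap {x₀ x₁ x₂ x₃ x₄ x₅ : ℕ} (h₀ : x₀ < x₁) (h₁ : x₁ < x₂)
    (h₂ : x₂ < x₃) (h₃ : x₃ < x₄) (h₄ : x₄ < x₅) :
    StrictMono (g1VertexMap x₀ x₁ x₂ x₃ x₄ x₅) := by
  refine strictMono_nat_of_lt_succ fun n => ?_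
  rcases n with _ | _ | _ | _ | _ | n <;> simp [g1VertexMap] <;> omega

lemma exists_rainbow_copy_G1 {G : List (Finset ℕ)} (χ : Fin G.length → ℕ)
    {a₀ a₁ a₂ v b c : ℕ} (h₀₁ : a₀ < a₁) (h₁₂ : a₁ < a₂) (h₂v : a₂ < v) (hvb : v < b) (hbc : b < c)
    {i₀ i₁ i₂ i₃ : Fin G.length} (h₀ : G.get i₀ = {a₁, v}) (h₁ : G.get i₁ = {a₁, c})
    (h₂ : G.get i₂ = {a₂, v}) (h₃ : G.get i₃ = {a₂, b}) (hχ : [χ i₀, χ i₁, χ i₂, χ i₃].Nodup) :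
    ∃ (φ : ℕ → ℕ) (f : Fin G1.length → Fin G.length),
      StrictMono φ ∧ Function.Injective f ∧
      (∀ i : Fin G1.length, ∀ w ∈ G1.get i, φ w ∈ G.get (f i)) ∧
      Function.Injective (χ ∘ f) := by
  have hinj : Function.Injective (χ ∘ ![i₀, i₁, i₂, i₃]) := by
    rw [← List.nodup_ofFn]
    simpa [List.ofFn_succ] using hχ
  refine ⟨g1VertexMap a₀ a₁ a₂ v b c, ![i₀, i₁, i₂, i₃],
    strictMono_g1VertexMap h₀₁ h₁₂ h₂v hvb hbc, hinj.of_comp, ?_, hinj⟩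
  simp only [List.get_eq_getElem] at h₀ h₁ h₂ h₃
  intro i
  fin_cases i <;> simp [G1, g1VertexMap, h₀, h₁, h₂, h₃]

section EdgeColoring

variable {β : Type*} {G : List β} {χ : Fin G.length → ℕ} {k : ℕ}
  {idx : β → Fin G.length}

lemma card_fiber_edge_color_le (hχ : ∀ c, #(univ.filter (χ · = c)) ≤ k)
    (hidx : ∀ E ∈ G, G.get (idx E) = E) {S : Finset ℕ} {e : ℕ → β} (he : ∀ a ∈ S, e a ∈ G)
    (hinj : Set.InjOn e S) (c : ℕ) : #(S.filter fun a => χ (idx (e a)) = c) ≤ k :=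
  card_fiber_comp_le hχ ((Set.LeftInvOn.injOn (s := {E | E ∈ G}) hidx).comp hinj he) c

end EdgeColoring

lemma exists_neighbour_color_notMem {G : List (Finset ℕ)} {χ : Fin G.length → ℕ} {k : ℕ}
    (hχ : ∀ c, #(univ.filter (χ · = c)) ≤ k) {idx : Finset ℕ → Fin G.length}
    (hidx : ∀ E ∈ G, G.get (idx E) = E) {D : Finset ℕ} {a : ℕ} (ha : a ∉ D) {cs : Finset ℕ}
    (hcs : #cs * k < #(D.filter fun x => ({a, x} : Finset ℕ) ∈ G)) :
    ∃ x ∈ D, ({a, x} : Finset ℕ) ∈ G ∧ χ (idx {a, x}) ∉ cs := by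
  obtain ⟨x, hx, hcx⟩ := exists_notMem_of_card_fiber_le
    (card_fiber_edge_color_le hχ hidx (fun x hx => (mem_filter.mp hx).2)
      (injOn_pair_left fun h => ha (mem_filter.mp h).1)) hcs
  exact ⟨x, (mem_filter.mp hx).1, (mem_filter.mp hx).2, hcx⟩

theorem stmt9_general (k : ℕ) (G : List (Finset ℕ))
    (hG : IsMultiple (3 * k + 1) G) : IsBlowup k G G1 := by
  classical
  obtain ⟨-, -, A, B, C, v, hA, hAv, hvB, hBC, -, hstar, hBdeg, hCdeg, -⟩ := hG
  intro χ hχ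
  obtain ⟨a, ha⟩ : A.Nonempty := card_pos.mp (by omega)
  obtain ⟨idx, hidx⟩ := List.exists_leftInverse_get (List.ne_nil_of_mem (hstar a ha))
  have hk : 0 < k := (card_pos.mpr ⟨idx {a, v}, by simp⟩).trans_le (hχ (χ (idx {a, v})))
  obtain ⟨a₀, ha₀, a₁, ha₁, a₂, ha₂, h₀₁, h₁₂, hc₁₂⟩ := exists_lt_lt_ne_of_card_fiber_le
    (card_fiber_edge_color_le hχ hidx hstar (injOn_pair_right fun hv => (hAv v hv).false))
    (by omega)
  obtain ⟨b, hb, hbG, hcb⟩ := exists_neighbour_color_notMem hχ hidx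
    (fun h => (hAv a₂ ha₂).not_gt (hvB a₂ h)) (cs := {χ (idx {a₁, v}), χ (idx {a₂, v})})
    ((Nat.mul_le_mul_right k card_le_two).trans_lt (by rw [hBdeg a₂ ha₂]; omega))
  obtain ⟨c, hc, hcG, hcc⟩ := exists_neighbour_color_notMem hχ hidx
    (fun h => by have := hBC b hb a₁ h; have := hvB b hb; have := hAv a₂ ha₂; omega)
    (cs := {χ (idx {a₁, v}), χ (idx {a₂, v}), χ (idx {a₂, b})})
    ((Nat.mul_le_mul_right k card_le_three).trans_lt (by rw [hCdeg a₁ ha₁]; omega))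
  exact exists_rainbow_copy_G1 χ h₀₁ h₁₂ (hAv a₂ ha₂) (hvB b hb) (hBC b hb c hc)
    (hidx _ (hstar a₁ ha₁)) (hidx _ hcG) (hidx _ (hstar a₂ ha₂)) (hidx _ hbG)
    (by simp only [mem_insert, mem_singleton, not_or] at hcb hcc; grind)

/-- Every `(3k+1)`-multiple of `G_1` is a `k`-blow-up of `G_1`. -/
theorem stmt9 (k : ℕ) (hk : 1 ≤ k) (G : List (Finset ℕ))
    (hG : IsMultiple (3 * k + 1) G) : IsBlowup k G G1 :=
  stmt9_general k G hG
end

section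
/- For every k ∈ ℕ there is a constant C (depending quadratically on k) such that every simple ordered graph G on vertex set [n] (n ≥ 2) containing no ordered copy of any k-multiple of G_1 satisfies e(G) < (k² + k)n + k²·n·log₂ n. -/
/-!
Orient every edge as `a < w` and let `N a` be the right neighbourhood of `a`. Call `T` a split
for `a` after `v ∈ N a` if `N a` has at least `k` elements in `(v, T]` and at least `k` beyond
`T`: then `a`, `v` and those elements form one branch of a `k`-multiple of `G_1`, and `k`
vertices `a` with a common split `(v, T)` form a whole `k`-multiple. So no `(v, T)` is a common
split of `k` vertices.

At most `2k` elements `v ∈ N a` have fewer than `2k` elements of `N a` above them. For every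
other `v` the splits form an interval `[splitLow, splitHigh)` with `splitHigh - v - 1 ≥ k`. Let
`p = ⌊log₂ (splitHigh - v - 1)⌋`. If the dyadic threshold `v + 2^p` is a split, label `(a, v)`
by `(v, p)`: each of the `n (log₂ n + 1)` labels is shared by fewer than `k` vertices `a`. If it
is not, the `k`-th element of `N a` after `v` lies beyond `v + 2^p`, while any `v' > v` with the
same `p` lies below `v + 2^p`; so for fixed `a` and `p` there are at most `k` such `v`. For
`k = 1` a single vertex with a split is already a `1`-multiple, so only the last two elements of
`N a` remain and `#N a ≤ 2`.
-/

open Finset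

section EdgeLists

theorem mem_vset {H : List (Finset ℕ)} {x : ℕ} : x ∈ vset H ↔ ∃ E ∈ H, x ∈ E := by
  induction H with
  | nil => simp [vset]
  | cons E H ih =>
    rw [show vset (E :: H) = E ∪ vset H from rfl, mem_union, ih]
    simp

theorem hContains_of_subset {G F : List (Finset ℕ)} (hF : F.Nodup) (hFG : ∀ E ∈ F, E ∈ G) :
    HContains G F := by
  have hlt (i : Fin F.length) : G.idxOf (F.get i) < G.length :=
    List.idxOf_lt_length_iff.mpr (hFG _ (List.get_mem F i))
  have hget (i : Fin F.length) : G.get ⟨_, hlt i⟩ = F.get i := by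
    simp [List.getElem_idxOf]
  refine ⟨id, fun i => ⟨_, hlt i⟩, strictMono_id, fun i j hij => ?_, fun i x hx => ?_⟩
  · exact List.nodup_iff_injective_get.mp hF
      ((hget i).symm.trans ((congrArg G.get hij).trans (hget j)))
  · rwa [hget]

theorem pair_eq_pair_of_lt {a w a' w' : ℕ} (h : a < w) (h' : a' < w')
    (he : ({a, w} : Finset ℕ) = {a', w'}) : a = a' ∧ w = w' := by
  have h1 : a ∈ ({a', w'} : Finset ℕ) := he ▸ by simp
  have h2 : w ∈ ({a', w'} : Finset ℕ) := he ▸ by simp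
  have h3 : a' ∈ ({a, w} : Finset ℕ) := he ▸ by simp
  simp only [mem_insert, mem_singleton] at h1 h2 h3
  omega

def rightNbhd (G : List (Finset ℕ)) (a : ℕ) : Finset ℕ := {w ∈ vset G | a < w ∧ {a, w} ∈ G}

theorem length_le_sum_card_rightNbhd {G : List (Finset ℕ)} {V : Finset ℕ} (hG : G.Nodup)
    (hGr : IsGraphH G) (hV : vset G ⊆ V) : G.length ≤ ∑ a ∈ V, #(rightNbhd G a) := by
  have hcover : G.toFinset ⊆ V.biUnion fun a => (rightNbhd G a).image fun w => {a, w} := by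
    intro E hE
    rw [List.mem_toFinset] at hE
    obtain ⟨x, y, hxy, rfl⟩ := card_eq_two.mp (hGr _ hE)
    have hx : x ∈ vset G := mem_vset.mpr ⟨_, hE, by simp⟩
    have hy : y ∈ vset G := mem_vset.mpr ⟨_, hE, by simp⟩
    simp only [mem_biUnion, mem_image, rightNbhd, mem_filter]
    rcases hxy.lt_or_gt with h | h
    · exact ⟨x, hV hx, y, ⟨hy, h, hE⟩, rfl⟩
    · exact ⟨y, hV hy, x, ⟨hx, h, pair_comm x y ▸ hE⟩, pair_comm y x⟩
  calc G.length = #G.toFinset := (List.toFinset_card_of_nodup hG).symm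
    _ ≤ _ := card_le_card hcover
    _ ≤ _ := card_biUnion_le
    _ ≤ _ := sum_le_sum fun a _ => card_image_le

end EdgeLists

section Split

variable (s : Finset ℕ) (k : ℕ)

def IsSplit (v T : ℕ) : Prop :=
  k ≤ #{x ∈ s | v < x ∧ x ≤ T} ∧ k ≤ #{x ∈ s | T < x}

-- For `v ∈ early s k` the splits after `v` are exactly `[splitLow s k v, splitHigh s k)`; outside
-- `early s k` the set defining `splitLow` may be empty, and `sInf ∅ = 0`.
noncomputable def splitLow (v : ℕ) : ℕ := sInf {T | k ≤ #{x ∈ s | v < x ∧ x ≤ T}}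

noncomputable def splitHigh : ℕ := sInf {T | #{x ∈ s | T < x} < k}

noncomputable def splitScale (v : ℕ) : ℕ := Nat.log 2 (splitHigh s k - v - 1)

def early : Finset ℕ := {v ∈ s | 2 * k ≤ #{x ∈ s | v < x}}

variable {s k} {v T : ℕ}

theorem early_subset : early s k ⊆ s := filter_subset _ _

theorem le_card_of_mem_early (hv : v ∈ early s k) : k ≤ #{x ∈ s | v < x} := by
  have := (mem_filter.mp hv).2
  omega

theorem splitLow_le (h : k ≤ #{x ∈ s | v < x ∧ x ≤ T}) : splitLow s k v ≤ T := Nat.sInf_le h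

theorem le_card_filter_le_splitLow (hv : k ≤ #{x ∈ s | v < x}) :
    k ≤ #{x ∈ s | v < x ∧ x ≤ splitLow s k v} := by
  refine Nat.sInf_mem (s := {T | k ≤ #{x ∈ s | v < x ∧ x ≤ T}}) ⟨s.sup id, ?_⟩
  show k ≤ #{x ∈ s | v < x ∧ x ≤ s.sup id}
  rwa [filter_congr fun x hx => and_iff_left (show x ≤ s.sup id from le_sup (f := id) hx)]

theorem card_filter_splitHigh_lt (hk : 1 ≤ k) : #{x ∈ s | splitHigh s k < x} < k := by
  refine Nat.sInf_mem (s := {T | #{x ∈ s | T < x} < k}) ⟨s.sup id, ?_⟩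
  show #{x ∈ s | s.sup id < x} < k
  rw [filter_false_of_mem fun x hx => not_lt.mpr (le_sup (f := id) hx), card_empty]
  omega

theorem isSplit_of_splitLow_le (hv : k ≤ #{x ∈ s | v < x}) (hlow : splitLow s k v ≤ T)
    (hhigh : T < splitHigh s k) : IsSplit s k v T := by
  refine ⟨(le_card_filter_le_splitLow hv).trans (card_le_card fun x => ?_),
    not_lt.mp (Nat.notMem_of_lt_sInf (s := {T | #{x ∈ s | T < x} < k}) hhigh)⟩
  simp only [mem_filter]
  exact fun ⟨hx, hvx, hxT⟩ => ⟨hx, hvx, hxT.trans hlow⟩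

theorem splitHigh_le {n : ℕ} (hk : 1 ≤ k) (hs : ∀ x ∈ s, x ≤ n) : splitHigh s k ≤ n := by
  refine Nat.sInf_le (show #{x ∈ s | n < x} < k from ?_)
  rw [filter_false_of_mem fun x hx => not_lt.mpr (hs x hx), card_empty]
  omega

theorem le_card_filter_le_splitHigh (hk : 1 ≤ k) (hv : v ∈ early s k) :
    k ≤ #{x ∈ s | v < x ∧ x ≤ splitHigh s k - 1} := by
  have hsub : {x ∈ s | v < x} ⊆ {x ∈ s | v < x ∧ x ≤ splitHigh s k - 1} ∪
      insert (splitHigh s k) {x ∈ s | splitHigh s k < x} := by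
    intro x
    simp only [mem_filter, mem_union, mem_insert]
    rintro ⟨hx, hvx⟩
    rcases lt_trichotomy x (splitHigh s k) with h | h | h
    exacts [Or.inl ⟨hx, hvx, by omega⟩, Or.inr (Or.inl h), Or.inr (Or.inr ⟨hx, h⟩)]
  have := (card_le_card hsub).trans
    ((card_union_le _ _).trans (add_le_add_right (card_insert_le _ _) _))
  have := card_filter_splitHigh_lt (s := s) hk
  have := (mem_filter.mp hv).2
  omega

theorem add_lt_splitHigh (hk : 1 ≤ k) (hv : v ∈ early s k) : v + k < splitHigh s k := by
  have h := (le_card_filter_le_splitHigh hk hv).trans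
    (card_le_card (t := Ioc v (splitHigh s k - 1)) fun x => by
      simp only [mem_filter, mem_Ioc]
      exact fun h => h.2)
  rw [Nat.card_Ioc] at h
  omega

theorem splitLow_lt_splitHigh (hk : 1 ≤ k) (hv : v ∈ early s k) :
    splitLow s k v < splitHigh s k := by
  have := splitLow_le (le_card_filter_le_splitHigh hk hv)
  have := add_lt_splitHigh hk hv
  omega

theorem card_filter_card_lt_le (m : ℕ) : #{v ∈ s | #{x ∈ s | v < x} < m} ≤ m := by
  have hanti : ∀ v ∈ s, ∀ w ∈ s, v < w → #{x ∈ s | w < x} < #{x ∈ s | v < x} := by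
    refine fun v _ w hw hvw => card_lt_card ⟨fun x => ?_, fun hsub => ?_⟩
    · simp only [mem_filter]
      exact fun ⟨hx, hwx⟩ => ⟨hx, hvw.trans hwx⟩
    · simpa using hsub (mem_filter.mpr ⟨hw, hvw⟩)
  calc #{v ∈ s | #{x ∈ s | v < x} < m} ≤ #(range m) := by
        refine card_le_card_of_injOn (fun v => #{x ∈ s | v < x}) (fun v hv => ?_)
          fun v hv w hw hvw => ?_
        · simpa using (mem_filter.mp hv).2
        · have hv := (mem_filter.mp hv).1
          have hw := (mem_filter.mp hw).1
          rcases lt_trichotomy v w with h | h | h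
          · exact absurd hvw (hanti v hv w hw h).ne'
          · exact h
          · exact absurd hvw (hanti w hw v hv h).ne
    _ = m := card_range m

end Split

section Dyadic

variable (s : Finset ℕ) (k : ℕ)

noncomputable def dyadicEarly : Finset ℕ :=
  {v ∈ early s k | splitLow s k v ≤ v + 2 ^ splitScale s k v}

noncomputable def nondyadicEarly : Finset ℕ :=
  {v ∈ early s k | v + 2 ^ splitScale s k v < splitLow s k v}

variable {s k} {v v' : ℕ}

theorem dyadicEarly_subset_early : dyadicEarly s k ⊆ early s k := filter_subset _ _

theorem nondyadicEarly_subset_early : nondyadicEarly s k ⊆ early s k := filter_subset _ _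

theorem card_le_add_card_dyadicEarly_add_card_nondyadicEarly :
    #s ≤ 2 * k + #(dyadicEarly s k) + #(nondyadicEarly s k) := by
  have hlate := card_filter_card_lt_le (s := s) (2 * k)
  have hearly := card_filter_add_card_filter_not (s := early s k)
    (p := fun v => splitLow s k v ≤ v + 2 ^ splitScale s k v)
  have hs := card_filter_add_card_filter_not (s := s) (p := fun v => 2 * k ≤ #{x ∈ s | v < x})
  simp only [not_le] at hearly hs
  rw [dyadicEarly, nondyadicEarly, ← early] at *
  omega

theorem add_two_pow_splitScale_lt_splitHigh (hk : 1 ≤ k) (hv : v ∈ early s k) :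
    v + 2 ^ splitScale s k v < splitHigh s k := by
  have hlt := add_lt_splitHigh hk hv
  have := Nat.pow_log_le_self 2 (x := splitHigh s k - v - 1) (by omega)
  rw [splitScale]
  omega

theorem isSplit_of_mem_dyadicEarly (hk : 1 ≤ k) (hv : v ∈ dyadicEarly s k) :
    IsSplit s k v (v + 2 ^ splitScale s k v) := by
  obtain ⟨hv, hlow⟩ := mem_filter.mp hv
  exact isSplit_of_splitLow_le (le_card_of_mem_early hv) hlow
    (add_two_pow_splitScale_lt_splitHigh hk hv)

theorem lt_splitLow_of_splitScale_eq (hk : 1 ≤ k) (hv : v ∈ nondyadicEarly s k)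
    (hv' : v' ∈ early s k) (hscale : splitScale s k v' = splitScale s k v) :
    v' < splitLow s k v := by
  obtain ⟨hv, hfar⟩ := mem_filter.mp hv
  have hlt := add_lt_splitHigh hk hv
  have hlt' := add_lt_splitHigh hk hv'
  have hpow' : 2 ^ splitScale s k v' ≤ splitHigh s k - v' - 1 :=
    Nat.pow_log_le_self 2 (by omega)
  have hpow : splitHigh s k - v - 1 < 2 ^ splitScale s k v * 2 := by
    simpa [splitScale, pow_succ] using
      Nat.lt_pow_succ_log_self (b := 2) (by norm_num) (splitHigh s k - v - 1)
  rw [hscale] at hpow'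
  omega

theorem card_nondyadicEarly_filter_splitScale_eq_le (hk : 1 ≤ k) (p : ℕ) :
    #{v ∈ nondyadicEarly s k | splitScale s k v = p} ≤ k := by
  set F := {v ∈ nondyadicEarly s k | splitScale s k v = p}
  by_contra! hF
  have hne : F.Nonempty := card_pos.mp (by omega)
  obtain ⟨hmin, hmin_scale⟩ := mem_filter.mp (F.min'_mem hne)
  obtain ⟨hmax, hmax_scale⟩ := mem_filter.mp (F.max'_mem hne)
  have hlow : splitLow s k (F.min' hne) ≤ F.max' hne := by
    refine splitLow_le ((show k ≤ #(F.erase (F.min' hne)) by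
      rw [card_erase_of_mem (F.min'_mem hne)]; omega).trans (card_le_card fun x hx => ?_))
    have hxF := mem_of_mem_erase hx
    exact mem_filter.mpr ⟨early_subset (nondyadicEarly_subset_early (filter_subset _ _ hxF)),
      (F.min'_le x hxF).lt_of_ne (ne_of_mem_erase hx).symm, F.le_max' x hxF⟩
  have := lt_splitLow_of_splitScale_eq hk hmin (nondyadicEarly_subset_early hmax)
    (hmax_scale.trans hmin_scale.symm)
  omega

theorem card_nondyadicEarly_le {n : ℕ} (hk : 2 ≤ k) (hs : ∀ x ∈ s, x ≤ n) :
    #(nondyadicEarly s k) ≤ k * Nat.log 2 n := by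
  have hmaps : ∀ v ∈ nondyadicEarly s k, splitScale s k v ∈ Icc 1 (Nat.log 2 n) := by
    intro v hv
    have hlt := add_lt_splitHigh (by omega) (nondyadicEarly_subset_early hv)
    have hhigh := splitHigh_le (k := k) (by omega) hs
    refine mem_Icc.mpr ⟨Nat.log_pos (n := splitHigh s k - v - 1) (by norm_num) ?_,
      Nat.log_mono_right ?_⟩
    all_goals omega
  simpa using card_le_mul_card_image_of_maps_to hmaps k
    fun p _ => card_nondyadicEarly_filter_splitScale_eq_le (by omega) p

end Dyadic

section SplitFan

def SplitFanFree (N : ℕ → Finset ℕ) (k : ℕ) : Prop :=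
  ∀ (S : Finset ℕ) (v T : ℕ), (∀ a ∈ S, v ∈ N a ∧ IsSplit (N a) k v T) → #S < k

variable {N : ℕ → Finset ℕ} {k n : ℕ}

theorem sum_card_dyadicEarly_le (hk : 1 ≤ k) (hN : ∀ a, N a ⊆ Icc 1 n)
    (hfree : SplitFanFree N k) :
    ∑ a ∈ Icc 1 n, #(dyadicEarly (N a) k) ≤ n * (Nat.log 2 n + 1) * (k - 1) := by
  set Q := Icc 1 n ×ˢ range (Nat.log 2 n + 1)
  set r : ℕ → ℕ × ℕ → Prop := fun a q => q.1 ∈ dyadicEarly (N a) k ∧ splitScale (N a) k q.1 = q.2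
  have habove : ∀ a, #(dyadicEarly (N a) k) ≤ #(Q.bipartiteAbove r a) := by
    refine fun a => card_le_card_of_injOn (fun v => (v, splitScale (N a) k v))
      (fun v hv => (mem_bipartiteAbove r).mpr ⟨mem_product.mpr ⟨?_, ?_⟩, hv, rfl⟩)
      fun v _ w _ h => congrArg Prod.fst h
    · exact hN a (early_subset (dyadicEarly_subset_early hv))
    · have hhigh := splitHigh_le (k := k) hk fun x hx => (mem_Icc.mp (hN a hx)).2
      exact mem_range.mpr (Nat.lt_succ_of_le (Nat.log_mono_right (b := 2) (by omega)))
  have hbelow : ∀ q ∈ Q, #((Icc 1 n).bipartiteBelow r q) ≤ k - 1 := by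
    intro q _
    suffices #((Icc 1 n).bipartiteBelow r q) < k by omega
    refine hfree _ q.1 (q.1 + 2 ^ q.2) fun a ha => ?_
    obtain ⟨-, hq, hscale⟩ := (mem_bipartiteBelow r).mp ha
    rw [← hscale]
    exact ⟨early_subset (dyadicEarly_subset_early hq), isSplit_of_mem_dyadicEarly hk hq⟩
  calc ∑ a ∈ Icc 1 n, #(dyadicEarly (N a) k) ≤ ∑ a ∈ Icc 1 n, #(Q.bipartiteAbove r a) :=
        sum_le_sum fun a _ => habove a
    _ = ∑ q ∈ Q, #((Icc 1 n).bipartiteBelow r q) :=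
        sum_card_bipartiteAbove_eq_sum_card_bipartiteBelow _
    _ ≤ #Q * (k - 1) := by simpa using sum_le_card_nsmul Q _ _ hbelow
    _ = n * (Nat.log 2 n + 1) * (k - 1) := by simp [Q]

theorem sum_card_le_of_splitFanFree (hk : 2 ≤ k) (hN : ∀ a, N a ⊆ Icc 1 n)
    (hfree : SplitFanFree N k) :
    ∑ a ∈ Icc 1 n, #(N a) ≤
      n * (2 * k) + n * (Nat.log 2 n + 1) * (k - 1) + n * (k * Nat.log 2 n) := by
  have hfar : ∑ a ∈ Icc 1 n, #(nondyadicEarly (N a) k) ≤ n * (k * Nat.log 2 n) := by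
    simpa using sum_le_card_nsmul (Icc 1 n) _ _ fun a _ =>
      card_nondyadicEarly_le hk fun x hx => (mem_Icc.mp (hN a hx)).2
  calc ∑ a ∈ Icc 1 n, #(N a)
      ≤ ∑ a ∈ Icc 1 n, (2 * k + #(dyadicEarly (N a) k) + #(nondyadicEarly (N a) k)) :=
        sum_le_sum fun a _ => card_le_add_card_dyadicEarly_add_card_nondyadicEarly
    _ = n * (2 * k) + ∑ a ∈ Icc 1 n, #(dyadicEarly (N a) k) +
          ∑ a ∈ Icc 1 n, #(nondyadicEarly (N a) k) := by
        simp [sum_add_distrib]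
    _ ≤ _ := by
        have := sum_card_dyadicEarly_le (by omega) hN hfree
        omega

theorem card_le_two_of_splitFanFree_one (hfree : SplitFanFree N 1) (a : ℕ) : #(N a) ≤ 2 := by
  have hearly : early (N a) 1 = ∅ := by
    refine eq_empty_of_forall_notMem fun v hv => ?_
    have := hfree {a} v (splitLow (N a) 1 v) fun a' ha' => by
      rw [mem_singleton.mp ha']
      exact ⟨early_subset hv, isSplit_of_splitLow_le (le_card_of_mem_early hv) le_rfl
        (splitLow_lt_splitHigh le_rfl hv)⟩
    simp at this
  simpa [dyadicEarly, nondyadicEarly, hearly] using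
    card_le_add_card_dyadicEarly_add_card_nondyadicEarly (s := N a) (k := 1)

end SplitFan

section Fan

def fanEdges (A : Finset ℕ) (v : ℕ) (W : ℕ → Finset ℕ) : Finset (Finset ℕ) :=
  A.biUnion fun a => insert {a, v} ((W a).image fun w => {a, w})

variable {A : Finset ℕ} {v : ℕ} {W : ℕ → Finset ℕ}

theorem mem_fanEdges {E : Finset ℕ} :
    E ∈ fanEdges A v W ↔ ∃ a ∈ A, E = {a, v} ∨ ∃ w ∈ W a, E = {a, w} := by
  simp [fanEdges, eq_comm]

theorem vset_toList_fanEdges (hA : A.Nonempty) :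
    vset (fanEdges A v W).toList = A ∪ {v} ∪ A.biUnion W := by
  ext x
  simp only [mem_vset, mem_toList, mem_fanEdges, mem_union, mem_singleton, mem_biUnion]
  constructor
  · rintro ⟨E, ⟨a, ha, rfl | ⟨w, hw, rfl⟩⟩, hx⟩ <;> simp only [mem_insert, mem_singleton] at hx
    · rcases hx with rfl | rfl
      exacts [Or.inl (Or.inl ha), Or.inl (Or.inr rfl)]
    · rcases hx with rfl | rfl
      exacts [Or.inl (Or.inl ha), Or.inr ⟨a, ha, hw⟩]
  · rintro ((hx | rfl) | ⟨a, ha, hx⟩)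
    · exact ⟨_, ⟨x, hx, Or.inl rfl⟩, mem_insert_self _ _⟩
    · exact ⟨_, ⟨hA.choose, hA.choose_spec, Or.inl rfl⟩, by simp⟩
    · exact ⟨_, ⟨a, ha, Or.inr ⟨x, hx, rfl⟩⟩, by simp⟩

variable (hAv : ∀ a ∈ A, a < v) (hW : ∀ a ∈ A, ∀ w ∈ W a, v < w)
include hAv hW

theorem exists_eq_pair_of_mem_fanEdges {E : Finset ℕ} (hE : E ∈ fanEdges A v W) :
    ∃ a w, a < w ∧ E = {a, w} := by
  obtain ⟨a, ha, rfl | ⟨w, hw, rfl⟩⟩ := mem_fanEdges.mp hE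
  exacts [⟨a, v, hAv a ha, rfl⟩, ⟨a, w, (hAv a ha).trans (hW a ha w hw), rfl⟩]

theorem hSimple_toList_fanEdges : HSimple (fanEdges A v W).toList := by
  refine ⟨nodup_toList _, fun E hE => ?_⟩
  obtain ⟨a, w, -, rfl⟩ := exists_eq_pair_of_mem_fanEdges hAv hW (mem_toList.mp hE)
  exact insert_nonempty _ _

theorem isGraphH_toList_fanEdges : IsGraphH (fanEdges A v W).toList := fun E hE => by
  obtain ⟨a, w, haw, rfl⟩ := exists_eq_pair_of_mem_fanEdges hAv hW (mem_toList.mp hE)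
  exact card_pair haw.ne

theorem pair_mem_fanEdges_iff {a w : ℕ} (ha : a ∈ A) (hvw : v < w) :
    {a, w} ∈ fanEdges A v W ↔ w ∈ W a := by
  refine ⟨fun h => ?_, fun h => mem_fanEdges.mpr ⟨a, ha, Or.inr ⟨w, h, rfl⟩⟩⟩
  have haw := (hAv a ha).trans hvw
  obtain ⟨a', ha', he | ⟨w', hw', he⟩⟩ := mem_fanEdges.mp h
  · have := pair_eq_pair_of_lt haw (hAv a' ha') he
    omega
  · obtain ⟨rfl, rfl⟩ := pair_eq_pair_of_lt haw ((hAv a' ha').trans (hW a' ha' w' hw')) he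
    exact hw'

theorem filter_pair_mem_fanEdges {a : ℕ} {X : Finset ℕ} (ha : a ∈ A) (hX : ∀ x ∈ X, v < x) :
    {x ∈ X | {a, x} ∈ fanEdges A v W} = X ∩ W a := by
  ext x
  simp only [mem_filter, mem_inter]
  exact ⟨fun ⟨hx, h⟩ => ⟨hx, (pair_mem_fanEdges_iff hAv hW ha (hX x hx)).mp h⟩,
    fun ⟨hx, h⟩ => ⟨hx, (pair_mem_fanEdges_iff hAv hW ha (hX x hx)).mpr h⟩⟩

end Fan

theorem isMultiple_fanEdges {A : Finset ℕ} {k v T : ℕ} {B C : ℕ → Finset ℕ} (hk : 1 ≤ k)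
    (hA : #A = k) (hAv : ∀ a ∈ A, a < v) (hB : ∀ a ∈ A, ∀ b ∈ B a, v < b ∧ b ≤ T)
    (hC : ∀ a ∈ A, ∀ c ∈ C a, T < c) (hBk : ∀ a ∈ A, #(B a) = k) (hCk : ∀ a ∈ A, #(C a) = k) :
    IsMultiple k (fanEdges A v fun a => B a ∪ C a).toList := by
  obtain ⟨a₀, ha₀⟩ : A.Nonempty := card_pos.mp (by omega)
  obtain ⟨b₀, hb₀⟩ : (B a₀).Nonempty := card_pos.mp (by rw [hBk a₀ ha₀]; omega)
  have hvT : v < T := (hB a₀ ha₀ b₀ hb₀).1.trans_le (hB a₀ ha₀ b₀ hb₀).2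
  have hvC : ∀ a ∈ A, ∀ c ∈ C a, v < c := fun a ha c hc => hvT.trans (hC a ha c hc)
  have hW : ∀ a ∈ A, ∀ w ∈ B a ∪ C a, v < w := fun a ha w hw =>
    (mem_union.mp hw).elim (fun hw => (hB a ha w hw).1) (hvC a ha w)
  have hBC : ∀ b ∈ A.biUnion B, ∀ c ∈ A.biUnion C, b < c := by
    simp only [mem_biUnion]
    exact fun b ⟨a, ha, hb⟩ c ⟨a', ha', hc⟩ => (hB a ha b hb).2.trans_lt (hC a' ha' c hc)
  have hdisj : Disjoint (A.biUnion B) (A.biUnion C) :=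
    disjoint_left.mpr fun x hb hc => lt_irrefl x (hBC x hb x hc)
  refine ⟨hSimple_toList_fanEdges hAv hW, isGraphH_toList_fanEdges hAv hW, A, A.biUnion B,
    A.biUnion C, v, hA, hAv, ?_, hBC, ?_, fun a ha => mem_toList.mpr (mem_fanEdges.mpr
    ⟨a, ha, Or.inl rfl⟩), fun a ha => ?_, fun a ha => ?_, fun E hE => ?_⟩
  · simp only [mem_biUnion]
    exact fun b ⟨a, ha, hb⟩ => (hB a ha b hb).1
  · rw [vset_toList_fanEdges ⟨a₀, ha₀⟩, biUnion_union, ← union_assoc]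
  · simp only [mem_toList]
    rw [filter_pair_mem_fanEdges hAv hW ha fun b hb => ?_, inter_union_distrib_left,
      inter_eq_right.mpr (subset_biUnion_of_mem B ha),
      disjoint_iff_inter_eq_empty.mp (hdisj.mono_right (subset_biUnion_of_mem C ha)),
      union_empty, hBk a ha]
    obtain ⟨a', ha', hb⟩ := mem_biUnion.mp hb
    exact (hB a' ha' b hb).1
  · simp only [mem_toList]
    rw [filter_pair_mem_fanEdges hAv hW ha fun c hc => ?_, inter_union_distrib_left,
      inter_eq_right.mpr (subset_biUnion_of_mem C ha),
      disjoint_iff_inter_eq_empty.mp (hdisj.symm.mono_right (subset_biUnion_of_mem B ha)),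
      empty_union, hCk a ha]
    obtain ⟨a', ha', hc⟩ := mem_biUnion.mp hc
    exact hvC a' ha' c hc
  · obtain ⟨a, ha, rfl | ⟨w, hw, rfl⟩⟩ := mem_fanEdges.mp (mem_toList.mp hE)
    · exact Or.inl ⟨a, ha, rfl⟩
    · refine Or.inr ⟨a, ha, w, ?_, rfl⟩
      rw [← biUnion_union]
      exact mem_biUnion.mpr ⟨a, ha, hw⟩

theorem splitFanFree_rightNbhd {k : ℕ} {G : List (Finset ℕ)} (hk : 1 ≤ k)
    (hfree : ∀ M : List (Finset ℕ), IsMultiple k M → ¬ HContains G M) :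
    SplitFanFree (rightNbhd G) k := by
  intro S v T hS
  by_contra! hkS
  obtain ⟨A, hAS, hA⟩ := exists_subset_card_eq hkS
  have hB (a : ℕ) (ha : a ∈ A) : ∃ B ⊆ {x ∈ rightNbhd G a | v < x ∧ x ≤ T}, #B = k :=
    exists_subset_card_eq (hS a (hAS ha)).2.1
  have hC (a : ℕ) (ha : a ∈ A) : ∃ C ⊆ {x ∈ rightNbhd G a | T < x}, #C = k :=
    exists_subset_card_eq (hS a (hAS ha)).2.2
  choose! B hBsub hBk using hB
  choose! C hCsub hCk using hC
  have hedge {a w : ℕ} (h : w ∈ rightNbhd G a) : a < w ∧ {a, w} ∈ G := (mem_filter.mp h).2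
  have hBfacts (a) (ha : a ∈ A) (b) (hb : b ∈ B a) := mem_filter.mp (hBsub a ha hb)
  have hCfacts (a) (ha : a ∈ A) (c) (hc : c ∈ C a) := mem_filter.mp (hCsub a ha hc)
  refine hfree _ (isMultiple_fanEdges hk hA (fun a ha => (hedge (hS a (hAS ha)).1).1)
    (fun a ha b hb => (hBfacts a ha b hb).2) (fun a ha c hc => (hCfacts a ha c hc).2) hBk hCk)
    (hContains_of_subset (nodup_toList _) fun E hE => ?_)
  obtain ⟨a, ha, rfl | ⟨w, hw, rfl⟩⟩ := mem_fanEdges.mp (mem_toList.mp hE)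
  · exact (hedge (hS a (hAS ha)).1).2
  · rcases mem_union.mp hw with hw | hw
    exacts [(hedge (hBfacts a ha w hw).1).2, (hedge (hCfacts a ha w hw).1).2]

theorem edge_bound_lt_of_two_le {k n : ℕ} (hk : 2 ≤ k) (hn : 2 ≤ n) :
    ((n * (2 * k) + n * (Nat.log 2 n + 1) * (k - 1) + n * (k * Nat.log 2 n) : ℕ) : ℝ) <
      ((k : ℝ) ^ 2 + k) * n + (k : ℝ) ^ 2 * n * Real.logb 2 n := by
  have hL : (Nat.log 2 n : ℝ) ≤ Real.logb 2 n := by exact_mod_cast Real.natLog_le_logb n 2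
  have hL1 : (1 : ℝ) ≤ Nat.log 2 n := by exact_mod_cast Nat.log_pos (b := 2) (by norm_num) hn
  have hkR : (2 : ℝ) ≤ k := by exact_mod_cast hk
  have hnR : (2 : ℝ) ≤ n := by exact_mod_cast hn
  push_cast [Nat.cast_sub (by omega : 1 ≤ k)]
  have hgap : (2 * k - 1 : ℝ) * n * Nat.log 2 n ≤ (k : ℝ) ^ 2 * n * Real.logb 2 n := by
    gcongr
    nlinarith
  have hsq : 0 < ((k : ℝ) - 1) ^ 2 * n := mul_pos (pow_pos (by linarith) 2) (by linarith)
  linarith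

theorem edge_bound_lt_one {n : ℕ} (hn : 2 ≤ n) :
    ((n * 2 : ℕ) : ℝ) < ((1 : ℝ) ^ 2 + 1) * n + (1 : ℝ) ^ 2 * n * Real.logb 2 n := by
  have : 0 < (n : ℝ) * Real.logb 2 n :=
    mul_pos (by positivity) (Real.logb_pos (by norm_num) (by exact_mod_cast hn))
  push_cast
  linarith

/-- Every simple ordered graph on `[n]` (`n ≥ 2`) containing no ordered copy of any
`k`-multiple of `G_1` has fewer than `(k²+k)n + k²·n·log₂ n` edges. -/
theorem stmt10 (k n : ℕ) (hk : 1 ≤ k) (hn : 2 ≤ n)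
    (G : List (Finset ℕ)) (hS : HSimple G) (hGr : IsGraphH G)
    (hv : vset G ⊆ Finset.Icc 1 n)
    (hfree : ∀ M : List (Finset ℕ), IsMultiple k M → ¬ HContains G M) :
    (G.length : ℝ) < ((k : ℝ) ^ 2 + k) * n + (k : ℝ) ^ 2 * n * Real.logb 2 n := by
  have hN : ∀ a, rightNbhd G a ⊆ Icc 1 n := fun a => (filter_subset _ _).trans hv
  have hfan := splitFanFree_rightNbhd hk hfree
  have hlen := length_le_sum_card_rightNbhd hS.1 hGr hv
  rcases hk.eq_or_lt with rfl | hk2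
  · have hsum : ∑ a ∈ Icc 1 n, #(rightNbhd G a) ≤ n * 2 := by
      simpa using sum_le_card_nsmul (Icc 1 n) _ 2 fun a _ => card_le_two_of_splitFanFree_one hfan a
    rw [Nat.cast_one]
    exact lt_of_le_of_lt (Nat.cast_le.mpr (hlen.trans hsum)) (edge_bound_lt_one hn)
  · exact lt_of_le_of_lt
      (Nat.cast_le.mpr (hlen.trans (sum_card_le_of_splitFanFree hk2 hN hfan)))
      (edge_bound_lt_of_two_le hk2 hn)
end

section
/- For every forest F (a simple graph without cycles), the unordered hypergraph extremal function satisfies ex_e^u(F,n) = O(n): there is a constant C = C(F) such that every simple hypergraph H on at most n vertices not containing F (in the unordered sense) has at most C·n edges. -/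
/-- Unordered containment of a graph `F` in a hypergraph `H`: an injection `φ` of vertices
and an injection `ψ` of edges such that both endpoints of each edge of `F` land in the
corresponding edge of `H`. -/
def ContainsU {V : Type*} (H : List (Finset ℕ)) (F : SimpleGraph V) : Prop :=
  ∃ (φ : V → ℕ) (ψ : Sym2 V → Fin H.length),
    Function.Injective φ ∧ Set.InjOn ψ F.edgeSet ∧
    ∀ e ∈ F.edgeSet, ∀ x ∈ e, φ x ∈ H.get (ψ e)

/-!
Repeatedly deleting a vertex of degree less than `D` together with its edges costs fewer than
`D` edges per vertex, so a hypergraph on `n` vertices with more than `(D + 2 ^ |V|) n` edges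
keeps more than `2 ^ |V|` edges, hence more than `|V|` vertices, all of degree at least `D`.
Into such a hypergraph a forest embeds greedily, one leaf at a time. If the new leaf `v` hangs
on `u`, already sent to `a`, then among the at least `D = 2 ^ |V| + |Sym2 V| + 1` edges through
`a`, at most `|Sym2 V|` are already in use and at most `2 ^ |V|` lie inside the current image
of the vertex map, so some unused edge through `a` supplies a fresh image for `v`.
-/

open Finset SimpleGraph

namespace SimpleGraph

variable {V : Type*} {G : SimpleGraph V}

lemma IsAcyclic.exists_adj_forall_adj_eq [Finite G.edgeSet] (hG : G.IsAcyclic) {x y : V}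
    (hxy : G.Adj x y) : ∃ u v, G.Adj u v ∧ ∀ w, G.Adj v w → w = u := by
  have : Nonempty V := ⟨x⟩
  -- The first vertex of a longest path is a leaf.
  obtain ⟨a, b, p, hp, hmax⟩ := Walk.exists_isPath_forall_isPath_length_le_length G
  have hnil : ¬p.Nil := fun h => by
    simpa [h.length_eq_zero] using hmax x y hxy.toWalk (by simp [hxy.ne])
  refine ⟨p.snd, a, (p.adj_snd hnil).symm, fun w hw => hG.eq_snd_of_adj_start hp hw ?_⟩
  by_contra hw'
  simpa using hmax w b (p.cons hw.symm) (hp.cons hw')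

end SimpleGraph

lemma Function.Injective.update_of_forall_ne {α V : Type*} [DecidableEq V] {f : V → α}
    (hf : Function.Injective f) (a : V) {b : α} (hb : ∀ x, f x ≠ b) :
    Function.Injective (Function.update f a b) := by
  intro x y hxy
  simp only [Function.update_apply] at hxy
  split_ifs at hxy with hx hy hy
  · rw [hx, hy]
  · exact absurd hxy.symm (hb y)
  · exact absurd hxy (hb x)
  · exact hf hxy

section SetSystem

variable {α V : Type*} [DecidableEq α]

lemma exists_subset_forall_le_card_filter_mem (D : ℕ) {n : ℕ} {A : Finset (Finset α)}
    (hA : #(A.biUnion id) ≤ n) :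
    ∃ B ⊆ A, #A ≤ #B + D * n ∧ ∀ a ∈ B.biUnion id, D ≤ #{E ∈ B | a ∈ E} := by
  induction n generalizing A with
  | zero => exact ⟨A, subset_rfl, by simp, fun a ha => ((card_pos.2 ⟨a, ha⟩).not_ge hA).elim⟩
  | succ n ih =>
    by_cases hmin : ∀ a ∈ A.biUnion id, D ≤ #{E ∈ A | a ∈ E}
    · exact ⟨A, subset_rfl, by simp, hmin⟩
    push Not at hmin
    obtain ⟨a, ha, hlow⟩ := hmin
    have hverts : #({E ∈ A | a ∉ E}.biUnion id) ≤ n := by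
      have hsub : {E ∈ A | a ∉ E}.biUnion id ⊆ (A.biUnion id).erase a := by
        intro x hx
        obtain ⟨E, hE, hxE⟩ := mem_biUnion.1 hx
        rw [mem_filter] at hE
        exact mem_erase.2 ⟨fun h => hE.2 (h ▸ hxE), mem_biUnion.2 ⟨E, hE.1, hxE⟩⟩
      have := card_le_card hsub
      rw [card_erase_of_mem ha] at this
      omega
    obtain ⟨B, hBA, hcard, hdeg⟩ := ih hverts
    refine ⟨B, hBA.trans (filter_subset _ _), ?_, hdeg⟩
    have := card_filter_add_card_filter_not (s := A) (fun E => a ∈ E)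
    rw [Nat.mul_succ]
    omega

lemma lt_card_biUnion_id_of_two_pow_lt {m : ℕ} {B : Finset (Finset α)} (hB : 2 ^ m < #B) :
    m < #(B.biUnion id) := by
  have hle : #B ≤ #(B.biUnion id).powerset :=
    card_le_card fun E hE => mem_powerset.2 (subset_biUnion_of_mem id hE)
  rw [card_powerset] at hle
  exact (Nat.pow_lt_pow_iff_right (by norm_num)).1 (hB.trans_le hle)

/-- Unlike `ContainsU`, vertices must land in the ground set of `B`: this is what lets the
minimum degree of `B` be used at the vertex to which the next leaf is attached. -/
structure HypergraphEmbedding (F : SimpleGraph V) (B : Finset (Finset α)) where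
  toFun : V → α
  injective : Function.Injective toFun
  toFun_mem : ∀ x, toFun x ∈ B.biUnion id
  edgeMap : Sym2 V → Finset α
  injOn_edgeMap : Set.InjOn edgeMap F.edgeSet
  edgeMap_mem : ∀ e ∈ F.edgeSet, edgeMap e ∈ B
  mem_edgeMap : ∀ e ∈ F.edgeSet, ∀ x ∈ e, toFun x ∈ edgeMap e

namespace HypergraphEmbedding

lemma containsU {F : SimpleGraph V} {B : Finset (Finset ℕ)} {H : List (Finset ℕ)}
    (f : HypergraphEmbedding F B) (hH : H ≠ []) (hBH : B ⊆ H.toFinset) : ContainsU H F := by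
  classical
  let idx : Sym2 V → Fin H.length := fun e =>
    if he : f.edgeMap e ∈ H then ⟨H.idxOf (f.edgeMap e), List.idxOf_lt_length_iff.2 he⟩
    else ⟨0, List.length_pos_of_ne_nil hH⟩
  have hidx : ∀ e ∈ F.edgeSet, H.get (idx e) = f.edgeMap e := fun e he => by
    simp [idx, List.mem_toFinset.1 (hBH (f.edgeMap_mem e he))]
  refine ⟨f.toFun, idx, f.injective, fun e he e' he' h => f.injOn_edgeMap he he' ?_,
    fun e he x hx => ?_⟩
  · rw [← hidx e he, ← hidx e' he', h]
  · rw [hidx e he]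
    exact f.mem_edgeMap e he x hx

variable [Fintype V] {F : SimpleGraph V} {B : Finset (Finset α)}

lemma exists_fresh_edge (f : HypergraphEmbedding F B) {a : α}
    (ha : 2 ^ Fintype.card V + Fintype.card (Sym2 V) < #{E ∈ B | a ∈ E}) :
    ∃ E ∈ B, a ∈ E ∧ (∀ e, f.edgeMap e ≠ E) ∧ ∃ b ∈ E, ∀ x, f.toFun x ≠ b := by
  obtain ⟨E, hE, hEnew⟩ : ∃ E ∈ {E ∈ B | a ∈ E},
      E ∉ univ.image f.edgeMap ∪ (univ.image f.toFun).powerset := by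
    refine exists_mem_notMem_of_card_lt_card (lt_of_le_of_lt ?_ ha)
    calc #(univ.image f.edgeMap ∪ (univ.image f.toFun).powerset)
        ≤ #(univ.image f.edgeMap) + #(univ.image f.toFun).powerset := card_union_le _ _
      _ ≤ Fintype.card (Sym2 V) + 2 ^ Fintype.card V := by
        rw [card_powerset, card_image_of_injective _ f.injective]
        exact add_le_add card_image_le le_rfl
      _ = _ := add_comm _ _
  rw [mem_filter] at hE
  simp only [mem_union, mem_image, mem_univ, true_and, mem_powerset, not_or, not_exists,
    not_subset] at hEnew
  exact ⟨E, hE.1, hE.2, hEnew.1, hEnew.2⟩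

lemma nonempty_sup_edge (f : HypergraphEmbedding F B) {u v : V} (huv : u ≠ v)
    (hv : ∀ w, ¬F.Adj v w)
    (hdeg : 2 ^ Fintype.card V + Fintype.card (Sym2 V) < #{E ∈ B | f.toFun u ∈ E}) :
    Nonempty (HypergraphEmbedding (F ⊔ edge u v) B) := by
  classical
  obtain ⟨E, hEB, huE, hEψ, b, hbE, hbφ⟩ := f.exists_fresh_edge hdeg
  have hvF : ∀ e ∈ F.edgeSet, v ∉ e := fun e he hve => by
    obtain ⟨w, rfl⟩ := Sym2.mem_iff_exists.1 hve
    exact hv w he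
  have huvF : s(u, v) ∉ F.edgeSet := fun h => hvF _ h (Sym2.mem_mk_right u v)
  have hagree : Set.EqOn (Function.update f.edgeMap s(u, v) E) f.edgeMap F.edgeSet :=
    fun e he => Function.update_of_ne (ne_of_mem_of_not_mem he huvF) _ _
  have hedges : (F ⊔ edge u v).edgeSet = insert s(u, v) F.edgeSet := by
    rw [edgeSet_sup, edgeSet_edge_of_ne huv, Set.union_singleton]
  refine ⟨⟨Function.update f.toFun v b, ?_, ?_, Function.update f.edgeMap s(u, v) E, ?_, ?_, ?_⟩⟩
  · exact f.injective.update_of_forall_ne v hbφ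
  · intro x
    rw [Function.update_apply]
    split_ifs
    · exact Finset.mem_biUnion.2 ⟨E, hEB, hbE⟩
    · exact f.toFun_mem x
  · rw [hedges, Set.injOn_insert huvF, Function.update_self, hagree.image_eq]
    exact ⟨f.injOn_edgeMap.congr hagree.symm, fun ⟨e, _, he⟩ => hEψ e he⟩
  · rw [hedges]
    rintro e (rfl | he)
    · simpa using hEB
    · simpa [hagree he] using f.edgeMap_mem e he
  · rw [hedges]
    rintro e (rfl | he) x hx
    · rw [Function.update_self]
      rcases Sym2.mem_iff.1 hx with rfl | rfl
      · simpa [huv] using huE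
      · simpa using hbE
    · rw [hagree he, Function.update_of_ne (ne_of_mem_of_not_mem hx (hvF e he))]
      exact f.mem_edgeMap e he x hx

end HypergraphEmbedding

variable [Fintype V] {B : Finset (Finset α)}

theorem SimpleGraph.IsAcyclic.nonempty_hypergraphEmbedding {F : SimpleGraph V}
    (hF : F.IsAcyclic) (hcard : Fintype.card V ≤ #(B.biUnion id))
    (hdeg : ∀ a ∈ B.biUnion id, 2 ^ Fintype.card V + Fintype.card (Sym2 V) < #{E ∈ B | a ∈ E}) :
    Nonempty (HypergraphEmbedding F B) := by
  induction F using WellFoundedLT.induction with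
  | ind F ih =>
  by_cases hbot : F = ⊥
  · subst hbot
    obtain ⟨g⟩ := Function.Embedding.nonempty_of_card_le (hcard.trans (Fintype.card_coe _).ge)
    exact ⟨⟨(↑) ∘ g, Subtype.val_injective.comp g.injective, fun x => (g x).2, fun _ => ∅,
      by simp, by simp, by simp⟩⟩
  obtain ⟨x, y, hxy⟩ := ne_bot_iff_exists_adj.1 hbot
  obtain ⟨u, v, huv, hleaf⟩ := hF.exists_adj_forall_adj_eq hxy
  have hv : ∀ w, ¬(F \ edge u v).Adj v w := by
    intro w hw
    rw [sdiff_adj, edge_adj] at hw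
    obtain rfl := hleaf w hw.1
    exact hw.2 ⟨Or.inr ⟨rfl, rfl⟩, huv.ne.symm⟩
  have hsup : F \ edge u v ⊔ edge u v = F := sdiff_sup_cancel ((edge_le_iff _).2 (Or.inr huv))
  have hlt : F \ edge u v < F := by
    simpa only [hsup] using lt_sup_edge _ _ _ huv.ne fun h => hv u h.symm
  obtain ⟨f⟩ := ih _ hlt (hF.anti hlt.le)
  exact hsup ▸ f.nonempty_sup_edge huv.ne hv (hdeg _ (f.toFun_mem u))

end SetSystem

lemma vset_eq_biUnion_id (H : List (Finset ℕ)) : vset H = H.toFinset.biUnion id := by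
  induction H with
  | nil => rfl
  | cons E H ih =>
    show E ∪ vset H = _
    simp [ih]

/-- For every forest `F`, the unordered hypergraph extremal function is linear: there is a
constant `C = C(F)` such that every simple hypergraph on at most `n` vertices not containing
`F` in the unordered sense has at most `C·n` edges. -/
theorem stmt12 {V : Type*} [Fintype V] (F : SimpleGraph V) (hF : F.IsAcyclic) :
    ∃ C : ℕ, ∀ n : ℕ, ∀ H : List (Finset ℕ), HSimple H → nv H ≤ n →
      ¬ ContainsU H F → H.length ≤ C * n := by
  set D := 2 ^ Fintype.card V + Fintype.card (Sym2 V) + 1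
  refine ⟨D + 2 ^ Fintype.card V, fun n H hH hn hFH => ?_⟩
  by_contra! hlen
  have hH0 : H ≠ [] := by rintro rfl; simp at hlen
  rw [nv, vset_eq_biUnion_id] at hn
  have hn0 : 0 < n := by
    obtain ⟨E, hE⟩ := List.exists_mem_of_ne_nil H hH0
    obtain ⟨x, hx⟩ := hH.2 E hE
    exact (card_pos.2 ⟨x, mem_biUnion.2 ⟨E, List.mem_toFinset.2 hE, hx⟩⟩).trans_le hn
  obtain ⟨B, hBH, hcard, hdeg⟩ := exists_subset_forall_le_card_filter_mem D hn
  have hB : 2 ^ Fintype.card V < #B := by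
    rw [List.toFinset_card_of_nodup hH.1] at hcard
    nlinarith
  obtain ⟨f⟩ := hF.nonempty_hypergraphEmbedding (lt_card_biUnion_id_of_two_pow_lt hB).le hdeg
  exact hFH (f.containsU hH0 hBH)
end

section
/- For every forest F with p vertices and q ≥ 2 edges and every k ∈ ℕ, there exists a forest F' with at most (p·q²)^{q+1} edges that is a (p-1)-blow-up of F in the unordered sense: for every edge coloring of F' using each color at most p-1 times, F' contains a copy of F with all edges of distinct colors. -/
/-!
Take for `F'` the complete `D`-ary tree of depth `q + 1` with `D = p (q + 1)`: words of length at
most `q + 1` over an alphabet of size `D`, each word joined to its tail. It has at most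
`(D + 1) ^ (q + 1) ≤ (p q²) ^ (q + 1)` edges. Given a colouring, embed `F` greedily, taking the
vertices in order of their distance `d` from a fixed root of their component and sending a vertex
at distance `d` to a word of length `d + 1`. Since `F` is a forest, a vertex has at most one
neighbour embedded before it, its parent, and the vertex goes to a child of the parent's image
(a root goes to a child of the empty word). Of the `D` children at most `p - 1` are occupied and,
as at most `q` colours are in use and each colour occurs at most `p - 1` times, at most
`q (p - 1)` are joined by an edge of a used colour; since `D > (q + 1)(p - 1)` a good child remains.
-/

namespace SimpleGraph

variable {V W : Type*}

def IsBlowup (F : SimpleGraph V) (G : SimpleGraph W) (c : ℕ) : Prop :=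
  ∀ χ : Sym2 W → ℕ, (∀ col, {e ∈ G.edgeSet | χ e = col}.ncard ≤ c) →
    ∃ φ : V → W, Function.Injective φ ∧ (∀ u v, F.Adj u v → G.Adj (φ u) (φ v)) ∧
      Set.InjOn (fun e ↦ χ (e.map φ)) F.edgeSet

lemma IsBlowup.of_iso {F : SimpleGraph V} {G : SimpleGraph W} {W' : Type*} {G' : SimpleGraph W'}
    {c : ℕ} (f : G' ≃g G) (h : IsBlowup F G c) : IsBlowup F G' c := by
  intro χ hχ
  have hclass (col : ℕ) : {e ∈ G.edgeSet | χ (e.map f.symm) = col} =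
      Sym2.map f.symm ⁻¹' {e ∈ G'.edgeSet | χ e = col} := by
    ext e
    simp only [Set.mem_ofPred_eq, Set.mem_preimage, f.symm.map_mem_edgeSet_iff]
  obtain ⟨φ, hinj, hadj, hcol⟩ := h (fun e ↦ χ (e.map f.symm)) fun col ↦ by
    rw [hclass, Set.ncard_preimage_of_injective_subset_range
      (Sym2.map.injective f.symm.injective) fun e _ ↦ ⟨e.map f, by simp [Sym2.map_map]⟩]
    exact hχ col
  refine ⟨f.symm ∘ φ, f.symm.injective.comp hinj,
    fun u v huv ↦ f.symm.map_adj_iff.2 (hadj u v huv), fun e₁ he₁ e₂ he₂ he ↦ hcol he₁ he₂ ?_⟩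
  simpa only [Sym2.map_map] using he

theorem isAcyclic_of_unique_lower_adj {β : Type*} [LinearOrder β] {G : SimpleGraph V} (h : V → β)
    (hne : ∀ ⦃u v⦄, G.Adj u v → h u ≠ h v)
    (huniq : ∀ ⦃u v w⦄, G.Adj u w → G.Adj v w → h u < h w → h v < h w → u = v) :
    G.IsAcyclic := by
  classical
  -- the two neighbours on a cycle of a vertex of maximal height are distinct and both lower
  intro v c hc
  obtain ⟨w, hw, hmax⟩ := c.support.toFinset.exists_max_image h ⟨v, by simp⟩
  rw [List.mem_toFinset] at hw
  set c' := c.rotate w hw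
  have hc' : c'.IsCycle := hc.rotate hw
  have hlt {x : V} (hx : x ∈ c'.support) (hadj : G.Adj x w) : h x < h w :=
    lt_of_le_of_ne (hmax x (by simpa [c'] using hx)) (hne hadj)
  exact hc'.snd_ne_penultimate <|
    huniq (c'.adj_snd hc'.not_nil).symm (c'.adj_penultimate hc'.not_nil)
    (hlt (c'.getVert_mem_support 1) (c'.adj_snd hc'.not_nil).symm)
    (hlt (c'.getVert_mem_support _) (c'.adj_penultimate hc'.not_nil))

section RootDist

variable (F : SimpleGraph V)

noncomputable def componentRoot (v : V) : V := (F.connectedComponentMk v).out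

noncomputable def rootDist (v : V) : ℕ := F.dist (F.componentRoot v) v

lemma reachable_componentRoot (v : V) : F.Reachable (F.componentRoot v) v :=
  ConnectedComponent.exact (Quot.out_eq _)

variable {F}

lemma componentRoot_eq_of_adj {u v : V} (h : F.Adj u v) :
    F.componentRoot u = F.componentRoot v := by
  rw [componentRoot, componentRoot, ConnectedComponent.connectedComponentMk_eq_of_adj h]

lemma rootDist_le_ncard_edgeSet [Finite F.edgeSet] (v : V) : F.rootDist v ≤ F.edgeSet.ncard := by
  have := Fintype.ofFinite F.edgeSet
  obtain ⟨p, hp, hlen⟩ := (F.reachable_componentRoot v).exists_path_of_dist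
  rw [rootDist, ← hlen, ← coe_edgeFinset, Set.ncard_coe_finset]
  exact hp.isTrail.length_le_card_edgeFinset

lemma exists_adj_rootDist_lt {v : V} (hv : F.rootDist v ≠ 0) :
    ∃ u, F.Adj u v ∧ F.rootDist u < F.rootDist v := by
  obtain ⟨p, -, hlen⟩ := (F.reachable_componentRoot v).exists_path_of_dist
  change p.length = F.rootDist v at hlen
  have hp : ¬p.Nil := by rw [← Walk.length_eq_zero_iff, hlen]; exact hv
  have hadj := p.adj_penultimate hp
  refine ⟨p.penultimate, hadj, ?_⟩
  calc F.rootDist p.penultimate ≤ p.dropLast.length := by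
        rw [rootDist, componentRoot_eq_of_adj hadj]; exact dist_le _
    _ < F.rootDist v := by rw [Walk.length_dropLast]; omega

lemma IsAcyclic.rootDist_add_one_of_adj (hF : F.IsAcyclic) {u v : V} (h : F.Adj u v)
    (hle : F.rootDist u ≤ F.rootDist v) : F.rootDist u + 1 = F.rootDist v := by
  have := hF.dist_eq_dist_add_one_of_adj_of_reachable _ h (F.reachable_componentRoot u)
  rw [componentRoot_eq_of_adj h] at this
  rw [rootDist, rootDist, componentRoot_eq_of_adj h] at *
  omega

lemma IsAcyclic.eq_of_adj_of_rootDist_lt (hF : F.IsAcyclic) {u₁ u₂ v : V} (h₁ : F.Adj u₁ v)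
    (h₂ : F.Adj u₂ v) (hr₁ : F.rootDist u₁ < F.rootDist v) (hr₂ : F.rootDist u₂ < F.rootDist v) :
    u₁ = u₂ := by
  classical
  obtain ⟨P, hP, -⟩ := (F.reachable_componentRoot v).exists_path_of_dist
  have key {u : V} (h : F.Adj u v) (hr : F.rootDist u < F.rootDist v) : u = P.penultimate := by
    obtain ⟨Q, hQ, hQlen⟩ :=
      (componentRoot_eq_of_adj h ▸ F.reachable_componentRoot u).exists_path_of_dist
    have hvQ : v ∉ Q.support := fun hv ↦ by
      have := (dist_le (Q.takeUntil v hv)).trans (Q.length_takeUntil_le_length hv)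
      rw [rootDist, rootDist, componentRoot_eq_of_adj h] at hr
      omega
    exact hF.eq_penultimate_of_adj_end hP h.symm
      (hF.mem_support_of_ne_mem_support_of_adj_of_isPath hP hQ h.symm hvQ)
  exact (key h₁ hr₁).trans (key h₂ hr₂).symm

end RootDist

section RainbowEmbedding

variable {F : SimpleGraph V} {G : SimpleGraph W} {χ : Sym2 W → ℕ} {s : Set V} {φ : V → W}

structure IsRainbowEmbeddingOn (F : SimpleGraph V) (G : SimpleGraph W) (χ : Sym2 W → ℕ)
    (s : Set V) (φ : V → W) : Prop where
  injOn : s.InjOn φ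
  map_adj : ∀ ⦃u⦄, u ∈ s → ∀ ⦃v⦄, v ∈ s → F.Adj u v → G.Adj (φ u) (φ v)
  injOn_color : (F.edgeSet ∩ s.sym2).InjOn fun e ↦ χ (e.map φ)

lemma isRainbowEmbeddingOn_empty : IsRainbowEmbeddingOn F G χ ∅ φ where
  injOn := Set.injOn_empty φ
  map_adj := by simp
  injOn_color := by simp

lemma isBlowup_of_forall_isRainbowEmbeddingOn_univ {c : ℕ}
    (h : ∀ χ : Sym2 W → ℕ, (∀ col, {e ∈ G.edgeSet | χ e = col}.ncard ≤ c) →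
      ∃ φ, IsRainbowEmbeddingOn F G χ Set.univ φ) :
    IsBlowup F G c := by
  intro χ hχ
  obtain ⟨φ, hφ⟩ := h χ hχ
  exact ⟨φ, Set.injOn_univ.1 hφ.injOn, fun u v ↦ hφ.map_adj trivial trivial,
    by simpa using hφ.injOn_color⟩

lemma IsRainbowEmbeddingOn.extend [DecidableEq V] (h : IsRainbowEmbeddingOn F G χ s φ) {v : V}
    (hv : v ∉ s) {x y : W} (hx : ∀ u ∈ s, F.Adj u v → φ u = x) (hxy : G.Adj x y) (hy : y ∉ φ '' s)
    (hcol : χ s(x, y) ∉ (fun e ↦ χ (e.map φ)) '' (F.edgeSet ∩ s.sym2)) :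
    IsRainbowEmbeddingOn F G χ (insert v s) (Function.update φ v y) := by
  set ψ := Function.update φ v y
  have hψv : ψ v = y := Function.update_self ..
  have hψs : s.EqOn ψ φ := fun u hu ↦ Function.update_of_ne (ne_of_mem_of_not_mem hu hv) ..
  have hneighbour {u : V} (hu : u ∈ s) (huv : F.Adj u v) : s(u, v).map ψ = s(x, y) := by
    rw [Sym2.map_mk, hψs hu, hψv, hx u hu huv]
  have hedge {e : Sym2 V} (he : e ∈ F.edgeSet ∩ (insert v s).sym2) :
      (e ∈ F.edgeSet ∩ s.sym2 ∧ e.map ψ = e.map φ) ∨ ∃ u ∈ s, F.Adj u v ∧ e = s(u, v) := by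
    induction e using Sym2.inductionOn with | _ a b =>
    rw [Set.mem_inter_iff, Set.mk_mem_sym2_iff, Set.mem_insert_iff, Set.mem_insert_iff] at he
    obtain ⟨hab, ha, hb⟩ := he
    rcases ha with rfl | ha <;> rcases hb with rfl | hb
    · exact (F.irrefl hab).elim
    · exact Or.inr ⟨b, hb, hab.symm, Sym2.eq_swap⟩
    · exact Or.inr ⟨a, ha, hab, rfl⟩
    · exact Or.inl ⟨⟨hab, ha, hb⟩, by rw [Sym2.map_mk, Sym2.map_mk, hψs ha, hψs hb]⟩
  refine ⟨?_, ?_, ?_⟩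
  · refine (Set.injOn_insert hv).2 ⟨h.injOn.congr hψs.symm, ?_⟩
    rwa [hψv, hψs.image_eq]
  · rintro a (rfl | ha) b (rfl | hb) hab
    · exact (F.irrefl hab).elim
    · rw [hψv, hψs hb, hx b hb hab.symm]; exact hxy.symm
    · rw [hψv, hψs ha, hx a ha hab]; exact hxy
    · rw [hψs ha, hψs hb]; exact h.map_adj ha hb hab
  · intro e₁ he₁ e₂ he₂ he
    simp only at he
    rcases hedge he₁ with ⟨he₁', hψ₁⟩ | ⟨u₁, hu₁, hadj₁, rfl⟩ <;>
      rcases hedge he₂ with ⟨he₂', hψ₂⟩ | ⟨u₂, hu₂, hadj₂, rfl⟩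
    · rw [hψ₁, hψ₂] at he; exact h.injOn_color he₁' he₂' he
    · rw [hψ₁, hneighbour hu₂ hadj₂] at he; exact (hcol ⟨e₁, he₁', he⟩).elim
    · rw [hψ₂, hneighbour hu₁ hadj₁] at he; exact (hcol ⟨e₂, he₂', he.symm⟩).elim
    · rw [h.injOn hu₁ hu₂ ((hx u₁ hu₁ hadj₁).trans (hx u₂ hu₂ hadj₂).symm)]

lemma exists_adj_notMem_of_card_lt [Finite W] [DecidableEq W] {c : ℕ}
    (hχ : ∀ col, {e ∈ G.edgeSet | χ e = col}.ncard ≤ c) {x : W} {N : Finset W}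
    (hN : ∀ y ∈ N, G.Adj x y) (B : Finset W) (C : Finset ℕ) (hcard : B.card + C.card * c < N.card) :
    ∃ y ∈ N, y ∉ B ∧ χ s(x, y) ∉ C := by
  have hclass (col : ℕ) : (N.filter fun y ↦ χ s(x, y) = col).card ≤ c := by
    refine le_trans ?_ (hχ col)
    rw [← Set.ncard_coe_finset]
    refine Set.ncard_le_ncard_of_injOn (fun y ↦ s(x, y)) (fun y hy ↦ ?_)
      (fun a _ b _ hab ↦ Sym2.congr_right.1 hab)
    rw [Finset.coe_filter] at hy
    exact ⟨hN y hy.1, hy.2⟩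
  by_contra! hall
  have hsub : N ⊆ B ∪ C.biUnion fun col ↦ N.filter fun y ↦ χ s(x, y) = col := by
    intro y hy
    by_cases hyB : y ∈ B
    · exact Finset.mem_union_left _ hyB
    · exact Finset.mem_union_right _ (Finset.mem_biUnion.2 ⟨_, hall y hy hyB, by simp [hy]⟩)
  have := calc N.card ≤ B.card + ∑ col ∈ C, (N.filter fun y ↦ χ s(x, y) = col).card :=
        (Finset.card_le_card hsub).trans <|
          (Finset.card_union_le _ _).trans (Nat.add_le_add_left Finset.card_biUnion_le _)
    _ ≤ B.card + C.card * c := by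
        gcongr
        simpa using Finset.sum_le_card_nsmul C _ c fun col _ ↦ hclass col
  omega

end RainbowEmbedding

end SimpleGraph

def BoundedWords (α : Type*) (n : ℕ) : Type _ := {l : List α // l.length ≤ n}

namespace BoundedWords

variable {α : Type*} {n : ℕ}

def nil : BoundedWords α n := ⟨[], Nat.zero_le n⟩

def cons (a : α) (x : BoundedWords α n) (hx : x.1.length < n) : BoundedWords α n :=
  ⟨a :: x.1, hx⟩

def tail (x : BoundedWords α n) : BoundedWords α n :=
  ⟨x.1.tail, (x.1.length_tail ▸ Nat.sub_le _ _).trans x.2⟩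

lemma cons_injective (x : BoundedWords α n) (hx : x.1.length < n) :
    Function.Injective fun a ↦ cons a x hx :=
  fun _ _ h ↦ List.head_eq_of_cons_eq (congrArg Subtype.val h)

lemma getElem?_injective :
    Function.Injective fun (x : BoundedWords α n) (i : Fin n) ↦ x.1[(i : ℕ)]? := by
  intro x y h
  refine Subtype.ext (List.ext_getElem? fun i ↦ ?_)
  by_cases hi : i < n
  · exact congrFun h ⟨i, hi⟩
  · rw [List.getElem?_eq_none (by have := x.2; omega),
      List.getElem?_eq_none (by have := y.2; omega)]

instance [Finite α] : Finite (BoundedWords α n) := Finite.of_injective _ getElem?_injective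

lemma natCard_le [Fintype α] : Nat.card (BoundedWords α n) ≤ (Fintype.card α + 1) ^ n := by
  simpa using Nat.card_le_card_of_injective _ (getElem?_injective (α := α) (n := n))

end BoundedWords

open BoundedWords

def SimpleGraph.wordTree (α : Type*) (n : ℕ) : SimpleGraph (BoundedWords α n) :=
  SimpleGraph.fromRel fun u v ↦ ∃ a, v.1 = a :: u.1

namespace SimpleGraph

variable {α : Type*} {n : ℕ}

lemma wordTree_adj_cons (a : α) (x : BoundedWords α n) (hx : x.1.length < n) :
    (wordTree α n).Adj x (cons a x hx) := by
  refine (fromRel_adj ..).2 ⟨fun h ↦ ?_, Or.inl ⟨a, rfl⟩⟩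
  have := congrArg (fun w : BoundedWords α n ↦ w.1.length) h
  simp [cons] at this

lemma wordTree_adj_length_ne {u v : BoundedWords α n} (h : (wordTree α n).Adj u v) :
    u.1.length ≠ v.1.length := by
  rcases ((fromRel_adj ..).1 h).2 with ⟨a, ha⟩ | ⟨a, ha⟩ <;> simp [ha]

lemma eq_tail_of_wordTree_adj {u v : BoundedWords α n} (h : (wordTree α n).Adj u v)
    (hlt : u.1.length < v.1.length) : u = v.tail := by
  rcases ((fromRel_adj ..).1 h).2 with ⟨a, ha⟩ | ⟨a, ha⟩
  · exact Subtype.ext (by simp [tail, ha])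
  · simp [ha] at hlt

lemma isAcyclic_wordTree : (wordTree α n).IsAcyclic :=
  isAcyclic_of_unique_lower_adj (fun x ↦ x.1.length) (fun _ _ ↦ wordTree_adj_length_ne)
    fun _ _ _ hu hv hlu hlv ↦
      (eq_tail_of_wordTree_adj hu hlu).trans (eq_tail_of_wordTree_adj hv hlv).symm

lemma ncard_edgeSet_wordTree_le [Finite α] :
    (wordTree α n).edgeSet.ncard ≤ Nat.card (BoundedWords α n) := by
  have hsub : (wordTree α n).edgeSet ⊆ Set.range fun v ↦ s(v.tail, v) := by
    intro e he
    induction e using Sym2.inductionOn with | _ u v =>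
    rw [mem_edgeSet] at he
    rcases (wordTree_adj_length_ne he).lt_or_gt with hlt | hlt
    · exact ⟨v, by simp only [← eq_tail_of_wordTree_adj he hlt]⟩
    · exact ⟨u, by simp only [← eq_tail_of_wordTree_adj he.symm hlt, Sym2.eq_swap]⟩
  calc _ ≤ (Set.range fun v : BoundedWords α n ↦ s(v.tail, v)).ncard := Set.ncard_le_ncard hsub
    _ ≤ Nat.card (BoundedWords α n) := by
        rw [← Set.image_univ, ← Set.ncard_univ]; exact Set.ncard_image_le

section Greedy

variable {V α : Type*} {F : SimpleGraph V} {n c : ℕ} {χ : Sym2 (BoundedWords α n) → ℕ}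

lemma IsAcyclic.exists_parent_word (hF : F.IsAcyclic) {s : Finset V} {a : V}
    (hmax : ∀ u ∈ s, F.rootDist u ≤ F.rootDist a)
    (hclosed : ∀ u, F.Adj u a → F.rootDist u < F.rootDist a → u ∈ s)
    {φ : V → BoundedWords α n} (hlen : ∀ u ∈ s, (φ u).1.length = F.rootDist u + 1) :
    ∃ x : BoundedWords α n, x.1.length = F.rootDist a ∧ ∀ u ∈ s, F.Adj u a → φ u = x := by
  by_cases hparent : ∃ u ∈ s, F.Adj u a
  · obtain ⟨u₀, hu₀, hadj₀⟩ := hparent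
    have hrank {u : V} (hu : u ∈ s) (h : F.Adj u a) : F.rootDist u + 1 = F.rootDist a :=
      hF.rootDist_add_one_of_adj h (hmax u hu)
    refine ⟨φ u₀, by rw [hlen u₀ hu₀, hrank hu₀ hadj₀], fun u hu h ↦ ?_⟩
    rw [hF.eq_of_adj_of_rootDist_lt h hadj₀ (by have := hrank hu h; omega)
      (by have := hrank hu₀ hadj₀; omega)]
  · refine ⟨nil, ?_, fun u hu h ↦ (hparent ⟨u, hu, h⟩).elim⟩
    by_contra h0
    obtain ⟨u, hu, hlt⟩ := exists_adj_rootDist_lt (Ne.symm h0)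
    exact hparent ⟨u, hclosed u hu hlt, hu⟩

lemma IsAcyclic.exists_extend_wordTree [Fintype V] [DecidableEq V] [Fintype α] (hF : F.IsAcyclic)
    (hχ : ∀ col, {e ∈ (wordTree α n).edgeSet | χ e = col}.ncard ≤ c)
    (hα : Fintype.card V - 1 + F.edgeSet.ncard * c < Fintype.card α) (hn : F.edgeSet.ncard < n)
    {s : Finset V} {a : V} (ha : a ∉ s) (hmax : ∀ u ∈ s, F.rootDist u ≤ F.rootDist a)
    (hclosed : ∀ u, F.Adj u a → F.rootDist u < F.rootDist a → u ∈ s)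
    {φ : V → BoundedWords α n} (hφ : IsRainbowEmbeddingOn F (wordTree α n) χ s φ)
    (hlen : ∀ u ∈ s, (φ u).1.length = F.rootDist u + 1) :
    ∃ ψ : V → BoundedWords α n, IsRainbowEmbeddingOn F (wordTree α n) χ ↑(insert a s) ψ ∧
      ∀ u ∈ insert a s, (ψ u).1.length = F.rootDist u + 1 := by
  classical
  obtain ⟨x, hxlen, hx⟩ := hF.exists_parent_word hmax hclosed hlen
  have hxn : x.1.length < n := hxlen ▸ (F.rootDist_le_ncard_edgeSet a).trans_lt hn
  set C := (Set.toFinite ((fun e ↦ χ (e.map φ)) '' (F.edgeSet ∩ (s : Set V).sym2))).toFinset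
  have hB : (s.image φ).card ≤ Fintype.card V - 1 := by
    have := Finset.card_lt_univ_of_notMem ha
    have := s.card_image_le (f := φ)
    omega
  have hC : C.card ≤ F.edgeSet.ncard := by
    rw [← Set.ncard_eq_toFinset_card _ (Set.toFinite _)]
    exact (Set.ncard_image_le (Set.toFinite _)).trans (Set.ncard_le_ncard Set.inter_subset_left)
  have hN : (Finset.univ.image fun b ↦ cons b x hxn).card = Fintype.card α :=
    Finset.card_image_of_injective _ (cons_injective x hxn)
  have hchild : ∀ y ∈ Finset.univ.image fun b ↦ cons b x hxn, (wordTree α n).Adj x y := by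
    simp only [Finset.mem_image, Finset.mem_univ, true_and, forall_exists_index]
    rintro _ b rfl
    exact wordTree_adj_cons b x hxn
  obtain ⟨y, hyN, hyB, hyC⟩ := exists_adj_notMem_of_card_lt hχ hchild (s.image φ) C <| by
    rw [hN]; exact (add_le_add hB (Nat.mul_le_mul_right c hC)).trans_lt hα
  refine ⟨Function.update φ a y, ?_, ?_⟩
  · rw [Finset.coe_insert]
    exact hφ.extend (Finset.mem_coe.not.2 ha) hx (hchild y hyN) (by simpa using hyB)
      (by simpa [C] using hyC)
  · intro u hu
    rcases Finset.mem_insert.1 hu with rfl | hu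
    · obtain ⟨b, -, rfl⟩ := Finset.mem_image.1 hyN
      rw [Function.update_self, ← hxlen]
      rfl
    · rw [Function.update_of_ne (ne_of_mem_of_not_mem hu ha)]
      exact hlen u hu

theorem IsAcyclic.isBlowup_wordTree [Fintype V] [Fintype α] (hF : F.IsAcyclic)
    (hα : Fintype.card V - 1 + F.edgeSet.ncard * c < Fintype.card α) (hn : F.edgeSet.ncard < n) :
    IsBlowup F (wordTree α n) c := by
  classical
  refine isBlowup_of_forall_isRainbowEmbeddingOn_univ fun χ hχ ↦ ?_
  suffices ∀ s : Finset V, (∀ v ∈ s, ∀ u, F.Adj u v → F.rootDist u < F.rootDist v → u ∈ s) →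
      ∃ φ : V → BoundedWords α n, IsRainbowEmbeddingOn F (wordTree α n) χ s φ ∧
        ∀ u ∈ s, (φ u).1.length = F.rootDist u + 1 by
    obtain ⟨φ, hφ, -⟩ := this Finset.univ (by simp)
    exact ⟨φ, by simpa using hφ⟩
  intro s
  induction s using Finset.induction_on_max_value F.rootDist with
  | empty => exact fun _ ↦ ⟨fun _ ↦ nil, by simpa using isRainbowEmbeddingOn_empty, by simp⟩
  | insert a s ha hmax ih =>
    intro hclosed
    have hbelow : ∀ v ∈ insert a s, ∀ u, F.Adj u v → F.rootDist u < F.rootDist v → u ∈ s := by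
      intro v hv u huv hlt
      refine (Finset.mem_insert.1 (hclosed v hv u huv hlt)).resolve_left ?_
      rintro rfl
      rcases Finset.mem_insert.1 hv with rfl | hv
      · omega
      · have := hmax v hv; omega
    obtain ⟨φ, hφ, hlen⟩ := ih fun v hv ↦ hbelow v (Finset.mem_insert_of_mem hv)
    exact hF.exists_extend_wordTree hχ hα hn ha hmax (hbelow a (Finset.mem_insert_self a s)) hφ
      hlen

end Greedy

end SimpleGraph

theorem stmt13_general {V : Type*} [Fintype V] (F : SimpleGraph V) (hF : F.IsAcyclic)
    (p q : ℕ) (hp : p = Fintype.card V) (hq : q = F.edgeSet.ncard) (hq2 : 2 ≤ q) :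
    ∃ (m : ℕ) (F' : SimpleGraph (Fin m)),
      F'.IsAcyclic ∧ F'.edgeSet.ncard ≤ (p * q ^ 2) ^ (q + 1) ∧
      ∀ χ : Sym2 (Fin m) → ℕ,
        (∀ c : ℕ, {e ∈ F'.edgeSet | χ e = c}.ncard ≤ p - 1) →
        ∃ φ : V → Fin m, Function.Injective φ ∧
          (∀ u v : V, F.Adj u v → F'.Adj (φ u) (φ v)) ∧
          Set.InjOn (fun e => χ (e.map φ)) F.edgeSet := by
  obtain ⟨r, rfl⟩ : ∃ r, p = r + 1 := by
    obtain ⟨e, -⟩ := Set.nonempty_of_ncard_ne_zero (s := F.edgeSet) (by omega)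
    have : Nonempty V := ⟨e.out.1⟩
    exact ⟨p - 1, by have := hp ▸ Fintype.card_pos (α := V); omega⟩
  let T := SimpleGraph.wordTree (Fin ((r + 1) * (q + 1))) (q + 1)
  let iso : T.comap (Finite.equivFin _).symm ≃g T := SimpleGraph.Iso.comap _ T
  refine ⟨_, _, iso.isAcyclic_iff.2 SimpleGraph.isAcyclic_wordTree, ?_,
    (hF.isBlowup_wordTree ?_ ?_).of_iso iso⟩
  · have hq' : q + 2 ≤ q ^ 2 := by nlinarith
    calc _ = T.edgeSet.ncard := by
          rw [← Nat.card_coe_set_eq, ← Nat.card_coe_set_eq]; exact Nat.card_congr iso.mapEdgeSet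
      _ ≤ (Fintype.card (Fin ((r + 1) * (q + 1))) + 1) ^ (q + 1) :=
          SimpleGraph.ncard_edgeSet_wordTree_le.trans BoundedWords.natCard_le
      _ ≤ ((r + 1) * q ^ 2) ^ (q + 1) := Nat.pow_le_pow_left (by rw [Fintype.card_fin]; nlinarith) _
  · rw [← hp, ← hq, Fintype.card_fin, Nat.add_sub_cancel]
    nlinarith
  · omega

/-- For every (unordered) forest `F` with `p` vertices and `q ≥ 2` edges and every `k ∈ ℕ`,
there is a forest `F'` with at most `(pq²)^{q+1}` edges that is a `(p-1)`-blow-up of `F` in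
the unordered sense: every edge colouring of `F'` using each colour at most `p-1` times
admits a copy of `F` with pairwise distinct colours on its edges. -/
theorem stmt13 {V : Type*} [Fintype V] (F : SimpleGraph V) (hF : F.IsAcyclic)
    (p q : ℕ) (hp : p = Fintype.card V) (hq : q = F.edgeSet.ncard) (hq2 : 2 ≤ q)
    (k : ℕ) :
    ∃ (m : ℕ) (F' : SimpleGraph (Fin m)),
      F'.IsAcyclic ∧ F'.edgeSet.ncard ≤ (p * q ^ 2) ^ (q + 1) ∧
      ∀ χ : Sym2 (Fin m) → ℕ,
        (∀ c : ℕ, {e ∈ F'.edgeSet | χ e = c}.ncard ≤ p - 1) →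
        ∃ φ : V → Fin m, Function.Injective φ ∧
          (∀ u v : V, F.Adj u v → F'.Adj (φ u) (φ v)) ∧
          Set.InjOn (fun e => χ (e.map φ)) F.edgeSet :=
  stmt13_general F hF p q hp hq hq2
end

section
/- Let v be a 2-sparse sequence over [n] with no subsequence of the form 1 2 1 2 1 (two symbols alternating five times), decomposed as v = I_1 I_2 ... I_{2n} where each interval I_j consists of distinct terms. Define the hypergraph H = (E_i : i ∈ [n]) with E_i = {j ∈ [2n] : symbol i appears in I_j}. Then H does not contain the partition H_2 = ({1,3,5},{2,4}). -/
/-!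
The two edges of a copy of `H₂` in `H` are two distinct symbols `a ≠ b`, and its vertices
`w₁ < ⋯ < w₅` are intervals `I_{w₁}, …, I_{w₅}` containing `a, b, a, b, a` in turn. As the
intervals are consecutive blocks of `v`, picking these occurrences gives an `ababa` subsequence.
-/

namespace List

variable {α : Type*}

theorem cons_sublist_flatten_of_mem_getD {L : List (List α)} {j : ℕ} {x : α} {l : List α}
    (hx : x ∈ L.getD j []) (hl : l <+ (L.drop (j + 1)).flatten) : x :: l <+ L.flatten := by
  have hj : j < L.length := by
    by_contra hj
    rw [getD_eq_default _ _ (not_lt.1 hj)] at hx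
    exact not_mem_nil hx
  rw [getD_eq_getElem _ _ hj] at hx
  have hx' : x ∈ (L.take (j + 1)).flatten :=
    mem_flatten_of_mem (mem_take_iff_getElem.2 ⟨j, by omega, rfl⟩) hx
  rw [← L.take_append_drop (j + 1), flatten_append]
  exact (singleton_sublist.2 hx').append hl

theorem sublist_flatten_drop_of_forall₂ {L : List (List α)} :
    ∀ {js : List ℕ} {xs : List α} {k : ℕ}, (∀ j ∈ js, k ≤ j) → js.Pairwise (· < ·) →
      Forall₂ (fun j x => x ∈ L.getD j []) js xs → xs <+ (L.drop k).flatten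
  | [], [], _, _, _, .nil => nil_sublist _
  | j :: _, _ :: _, k, hk, hjs, .cons hx hxs => by
    rw [pairwise_cons] at hjs
    have hkj := hk j mem_cons_self
    refine cons_sublist_flatten_of_mem_getD (j := j - k) ?_ ?_
    · simpa only [getD_eq_getElem?_getD, getElem?_drop, Nat.add_sub_cancel' hkj] using hx
    · rw [drop_drop, show k + (j - k + 1) = j + 1 by omega]
      exact sublist_flatten_drop_of_forall₂ hjs.1 hjs.2 hxs

theorem sublist_flatten_of_forall₂ {L : List (List α)} {js : List ℕ} {xs : List α}
    (hjs : js.Pairwise (· < ·)) (h : Forall₂ (fun j x => x ∈ L.getD j []) js xs) :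
    xs <+ L.flatten := by
  simpa using sublist_flatten_drop_of_forall₂ (k := 0) (by simp) hjs h

end List

theorem stmt15_general (n : ℕ) (v : List ℕ)
    (hno : ¬ ∃ a b : ℕ, a ≠ b ∧ [a, b, a, b, a].Sublist v)
    (Is : List (List ℕ)) (hj : Is.flatten = v)
    (H : List (Finset ℕ))
    (hH : H = (List.range n).map fun i =>
      (Finset.Icc 1 (2 * n)).filter fun j => i + 1 ∈ Is.getD (j - 1) []) :
    ¬ HContains H [({1, 3, 5} : Finset ℕ), {2, 4}] := by
  subst hH hj
  rintro ⟨φ, f, hφ, hf, hmaps⟩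
  have hincident (i : Fin 2) (k : ℕ) (hk : k ∈ [({1, 3, 5} : Finset ℕ), {2, 4}].get i) :
      1 ≤ φ k ∧ (f i : ℕ) + 1 ∈ Is.getD (φ k - 1) [] := by
    have := hmaps i k hk
    simp only [List.get_eq_getElem, List.getElem_map, List.getElem_range, Finset.mem_filter,
      Finset.mem_Icc] at this
    exact ⟨this.1.1, this.2⟩
  obtain ⟨h1, hw1⟩ := hincident 0 1 (by decide)
  obtain ⟨-, hw2⟩ := hincident 1 2 (by decide)
  obtain ⟨-, hw3⟩ := hincident 0 3 (by decide)
  obtain ⟨-, hw4⟩ := hincident 1 4 (by decide)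
  obtain ⟨-, hw5⟩ := hincident 0 5 (by decide)
  have hab : (f 0 : ℕ) ≠ f 1 := fun h => absurd (hf (Fin.val_injective h)) (by decide)
  refine hno ⟨f 0 + 1, f 1 + 1, by omega,
    List.sublist_flatten_of_forall₂ (js := [φ 1 - 1, φ 2 - 1, φ 3 - 1, φ 4 - 1, φ 5 - 1]) ?_
      (.cons hw1 (.cons hw2 (.cons hw3 (.cons hw4 (.cons hw5 .nil)))))⟩
  have hφ5 : φ 1 < φ 2 ∧ φ 2 < φ 3 ∧ φ 3 < φ 4 ∧ φ 4 < φ 5 :=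
    ⟨hφ (by norm_num), hφ (by norm_num), hφ (by norm_num), hφ (by norm_num)⟩
  simp only [List.pairwise_cons, List.mem_cons, List.not_mem_nil, or_false, forall_eq_or_imp,
    forall_eq, IsEmpty.forall_iff, implies_true, List.Pairwise.nil, and_true]
  omega

/-- Let `v` be a 2-sparse sequence over `[n]` with no `ababa` pattern, decomposed as
`v = I_1 ⋯ I_{2n}` with each interval consisting of distinct terms.  The hypergraph
`H = (E_i : i ∈ [n])` with `E_i = {j ∈ [2n] : i appears in I_j}` does not contain the
partition `H_2 = ({1,3,5},{2,4})`. -/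
theorem stmt15 (n : ℕ) (v : List ℕ) (hmem : ∀ x ∈ v, x ∈ Finset.Icc 1 n)
    (hsp : v.Chain' (· ≠ ·))
    (hno : ¬ ∃ a b : ℕ, a ≠ b ∧ [a, b, a, b, a].Sublist v)
    (Is : List (List ℕ)) (hj : Is.flatten = v) (hl : Is.length = 2 * n)
    (hnd : ∀ I ∈ Is, I.Nodup)
    (H : List (Finset ℕ))
    (hH : H = (List.range n).map fun i =>
      (Finset.Icc 1 (2 * n)).filter fun j => i + 1 ∈ Is.getD (j - 1) []) :
    ¬ HContains H [({1, 3, 5} : Finset ℕ), {2, 4}] :=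
  stmt15_general n v hno Is hj H hH
end

section
/- Let F be a star forest with r components, centers [r] and vertex set [p], and for k ∈ ℕ let F(k) be the star forest on [r + (p-r)k] with centers [r] in which, for i = 1,...,p-r, each vertex in [r+(i-1)k+1, r+ik] is joined to the same center as vertex r+i is in F. Then F(t) with t = (p-1)(q-1)+1 and q = p-r is a (p-1)-blow-up of F: for every edge coloring of F(t) using each color at most p-1 times, there is an ordered copy of F in F(t) with all edge colors distinct. -/

lemma exists_selection (q t k : ℕ) (χ : ℕ → ℕ)
    (hcount : ∀ cc, ((Finset.range (q*t)).filter (fun m => χ m = cc)).card ≤ k)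
    (hlt : (q-1)*k < t) :
    ∃ s : ℕ → ℕ, (∀ j, j < q → j*t ≤ s j ∧ s j < (j+1)*t) ∧
      ∀ j1 j2, j1 < q → j2 < q → j1 ≠ j2 → χ (s j1) ≠ χ (s j2) := by
  suffices h : ∀ i, i ≤ q → ∃ s : ℕ → ℕ,
      (∀ j, j < i → j*t ≤ s j ∧ s j < (j+1)*t) ∧
      (∀ j1 j2, j1 < i → j2 < i → j1 ≠ j2 → χ (s j1) ≠ χ (s j2)) by
    obtain ⟨s, h1, h2⟩ := h q le_rfl
    exact ⟨s, h1, h2⟩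
  intro i hi
  induction i with
  | zero => exact ⟨id, by omega, by omega⟩
  | succ i ih =>
    obtain ⟨s, h1, h2⟩ := ih (by omega)
    set S : Finset ℕ := (Finset.range i).image (fun j => χ (s j)) with hS
    set B : Finset ℕ := Finset.Ico (i*t) ((i+1)*t) with hB
    have hBcard : B.card = t := by
      rw [hB, Nat.card_Ico]
      have : (i+1)*t = i*t + t := by ring
      omega
    have hBsub : B ⊆ Finset.range (q*t) := by
      intro m hm
      rw [hB, Finset.mem_Ico] at hm
      rw [Finset.mem_range]
      calc m < (i+1)*t := hm.2
        _ ≤ q*t := Nat.mul_le_mul_right t (by omega)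
    have hforb : (B.filter (fun m => χ m ∈ S)).card < t := by
      calc (B.filter (fun m => χ m ∈ S)).card
          ≤ (S.biUnion (fun cc => B.filter (fun m => χ m = cc))).card := by
            apply Finset.card_le_card
            intro m hm
            simp only [Finset.mem_filter] at hm
            exact Finset.mem_biUnion.mpr ⟨χ m, hm.2, Finset.mem_filter.mpr ⟨hm.1, rfl⟩⟩
        _ ≤ ∑ cc ∈ S, (B.filter (fun m => χ m = cc)).card := Finset.card_biUnion_le
        _ ≤ ∑ cc ∈ S, k := by
            apply Finset.sum_le_sum
            intro cc _
            calc (B.filter (fun m => χ m = cc)).card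
                ≤ ((Finset.range (q*t)).filter (fun m => χ m = cc)).card :=
                  Finset.card_le_card (Finset.filter_subset_filter _ hBsub)
              _ ≤ k := hcount cc
        _ = S.card * k := by rw [Finset.sum_const, smul_eq_mul]
        _ ≤ i * k := Nat.mul_le_mul_right k ((Finset.card_image_le).trans (by simp))
        _ ≤ (q-1) * k := Nat.mul_le_mul_right k (by omega)
        _ < t := hlt
    have hex : ∃ m ∈ B, χ m ∉ S := by
      by_contra h
      push_neg at h
      have heq : B.filter (fun m => χ m ∈ S) = B := Finset.filter_eq_self.mpr h
      rw [heq, hBcard] at hforb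
      omega
    obtain ⟨m, hmB, hmS⟩ := hex
    rw [hB, Finset.mem_Ico] at hmB
    refine ⟨fun j => if j = i then m else s j, ?_, ?_⟩
    · intro j hj
      by_cases hji : j = i
      · subst hji; simp [hmB]
      · simp only [if_neg hji]
        exact h1 j (by omega)
    · intro j1 j2 hj1 hj2 hne
      have key : ∀ j < i, χ m ≠ χ (s j) := by
        intro j hj hcontra
        exact hmS (Finset.mem_image.mpr ⟨j, Finset.mem_range.mpr hj, hcontra.symm⟩)
      by_cases e1 : j1 = i <;> by_cases e2 : j2 = i
      · omega
      · simp only [if_pos e1, if_neg e2]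
        exact key j2 (by omega)
      · simp only [if_neg e1, if_pos e2]
        exact fun hc => key j1 (by omega) hc.symm
      · simp only [if_neg e1, if_neg e2]
        exact h2 j1 j2 (by omega) (by omega) hne

/-- Let `F` be a star forest on `[p]` with centers `[r]`, where the leaf `r+i` is joined to
the center `c (r+i)`, and let `F(k)` be the star forest in which each leaf in
`[r+(i-1)k+1, r+ik]` is joined to the same center as `r+i` is in `F`.  Then `F(t)` with
`t = (p-1)(q-1)+1`, `q = p-r`, is a `(p-1)`-blow-up of `F`. -/
theorem stmt18 (r p : ℕ) (hr : 1 ≤ r) (hrp : r < p)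
    (c : ℕ → ℕ) (hc : ∀ i ∈ Finset.Icc (r + 1) p, c i ∈ Finset.Icc 1 r)
    (q t : ℕ) (hq : q = p - r) (ht : t = (p - 1) * (q - 1) + 1)
    (F Ft : List (Finset ℕ))
    (hF : F = (List.range (p - r)).map fun m => ({c (r + m + 1), r + m + 1} : Finset ℕ))
    (hFt : Ft = (List.range ((p - r) * t)).map fun m =>
      ({c (r + m / t + 1), r + m + 1} : Finset ℕ)) :
    IsBlowup (p - 1) Ft F := by
  subst hF hFt hq
  intro χ hχ
  have htpos : 1 ≤ t := by omega
  have hlt : ((p - r) - 1) * (p - 1) < t := by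
    rw [ht, mul_comm]
    omega
  have hNval : (List.map (fun m => ({c (r + m / t + 1), r + m + 1} : Finset ℕ))
      (List.range ((p - r) * t))).length = (p - r) * t := by simp
  have hcount : ∀ cc, ((Finset.range ((p-r)*t)).filter
      (fun m => (if h : m < (p-r)*t then χ ⟨m, lt_of_lt_of_le h (le_of_eq hNval.symm)⟩ else 0) = cc)).card ≤ p - 1 := by
    intro cc
    have hsub : (Finset.range ((p-r)*t)).filter
        (fun m => (if h : m < (p-r)*t then χ ⟨m, lt_of_lt_of_le h (le_of_eq hNval.symm)⟩ else 0) = cc) ⊆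
        Finset.image Fin.val (Finset.univ.filter (fun i => χ i = cc)) := by
      intro m hm
      rw [Finset.mem_filter, Finset.mem_range] at hm
      obtain ⟨hmN, hm2⟩ := hm
      rw [dif_pos hmN] at hm2
      exact Finset.mem_image.mpr ⟨⟨m, lt_of_lt_of_le hmN (le_of_eq hNval.symm)⟩,
        Finset.mem_filter.mpr ⟨Finset.mem_univ _, hm2⟩, rfl⟩
    calc _ ≤ (Finset.image Fin.val (Finset.univ.filter (fun i => χ i = cc))).card :=
          Finset.card_le_card hsub
      _ = ((Finset.univ.filter (fun i => χ i = cc))).card :=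
          Finset.card_image_of_injective _ Fin.val_injective
      _ ≤ p - 1 := hχ cc
  obtain ⟨s, hs, hsc⟩ := exists_selection (p - r) t (p - 1)
    (fun m => if h : m < (p-r)*t then χ ⟨m, lt_of_lt_of_le h (le_of_eq hNval.symm)⟩ else 0)
    hcount hlt
  have hsN : ∀ j, j < p - r → s j < (p-r)*t := by
    intro j hj
    have := (hs j hj).2
    have h2 : (j+1)*t ≤ (p-r)*t := Nat.mul_le_mul_right t (by omega)
    omega
  have hsdiv : ∀ j, j < p - r → s j / t = j := by
    intro j hj
    obtain ⟨h1, h2⟩ := hs j hj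
    exact Nat.div_eq_of_lt_le h1 (by simpa [Nat.succ_mul, Nat.add_mul] using h2)
  refine ⟨fun v => if v ≤ r then v else if v ≤ p then r + s (v - r - 1) + 1 else r + (p-r)*t + v,
    fun i => ⟨s i.val, by
      have hi : i.val < p - r := by have := i.isLt; simpa using this
      exact lt_of_lt_of_le (hsN _ hi) (le_of_eq hNval.symm)⟩, ?_, ?_, ?_, ?_⟩
  · -- StrictMono
    apply strictMono_nat_of_lt_succ
    intro n
    by_cases h1 : n + 1 ≤ r
    · simp only [if_pos (by omega : n ≤ r), if_pos h1]; omega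
    · by_cases h2 : n + 1 ≤ p
      · have hjlt : n + 1 - r - 1 < p - r := by omega
        have hub := (hs _ hjlt).2
        have hlb := (hs _ hjlt).1
        simp only [if_neg h1, if_pos h2]
        by_cases h3 : n ≤ r
        · simp only [if_pos h3]; omega
        · have h4 : n ≤ p := by omega
          simp only [if_neg h3, if_pos h4]
          have hj' : n - r - 1 < p - r := by omega
          have hub' := (hs _ hj').2
          have hstep : (n - r - 1 + 1) * t ≤ (n + 1 - r - 1) * t :=
            Nat.mul_le_mul_right t (by omega)
          omega
      · simp only [if_neg (by omega : ¬ n + 1 ≤ r), if_neg h2]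
        by_cases h3 : n ≤ p
        · have hn : n = p := by omega
          simp only [if_neg (by omega : ¬ n ≤ r), if_pos h3]
          have hjlt : n - r - 1 < p - r := by omega
          have hub := (hs _ hjlt).2
          have : (n - r - 1 + 1) * t ≤ (p - r) * t := Nat.mul_le_mul_right t (by omega)
          omega
        · simp only [if_neg (by omega : ¬ n ≤ r), if_neg h3]; omega
  · -- Injective f
    intro i j hij
    have hi : i.val < p - r := by have := i.isLt; simpa using this
    have hj : j.val < p - r := by have := j.isLt; simpa using this
    have hval : s i.val = s j.val := by
      have := congrArg Fin.val hij
      simpa using this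
    have : i.val = j.val := by
      by_contra hne
      rcases Nat.lt_or_ge i.val j.val with h | h
      · have u1 := (hs _ hi).2
        have u2 := (hs _ hj).1
        have : (i.val + 1) * t ≤ j.val * t := Nat.mul_le_mul_right t (by omega)
        omega
      · have h' : j.val < i.val := by omega
        have u1 := (hs _ hj).2
        have u2 := (hs _ hi).1
        have : (j.val + 1) * t ≤ i.val * t := Nat.mul_le_mul_right t (by omega)
        omega
    exact Fin.ext this
  · -- edge mapping
    intro i v hv
    have hi : i.val < p - r := by have := i.isLt; simpa using this
    simp only [List.get_eq_getElem, List.getElem_map, List.getElem_range] at hv ⊢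
    rw [hsdiv i.val hi]
    have hcmem := hc (r + i.val + 1) (Finset.mem_Icc.mpr ⟨by omega, by omega⟩)
    rw [Finset.mem_Icc] at hcmem
    rw [Finset.mem_insert, Finset.mem_singleton] at hv
    rw [Finset.mem_insert, Finset.mem_singleton]
    obtain ⟨hlb, hub⟩ := hs i.val hi
    rcases hv with hv | hv
    · subst hv
      left
      simp only [if_pos (by omega : c (r + i.val + 1) ≤ r)]
    · subst hv
      right
      have hle : r + i.val + 1 ≤ p := by omega
      simp only [if_neg (by omega : ¬ r + i.val + 1 ≤ r), if_pos hle]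
      congr 1
      have : r + i.val + 1 - r - 1 = i.val := by omega
      rw [this]
  · -- colors injective
    intro i j hij
    have hi : i.val < p - r := by have := i.isLt; simpa using this
    have hj : j.val < p - r := by have := j.isLt; simpa using this
    by_contra hne
    have hne' : i.val ≠ j.val := fun h => hne (Fin.ext h)
    apply hsc i.val j.val hi hj hne'
    simp only [dif_pos (hsN _ hi), dif_pos (hsN _ hj)]
    exact hij
end
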